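/- arXiv:2403.16556 — 8 statements merged into one kernel-verified Lean document; each statement's English description precedes it below -/
import Mathlib

section
/- Let N be an m×r real matrix and let C = ker(N) ∩ ℝ^r_{≥0} be the associated polyhedral cone. Suppose E^(1), …, E^(ℓ) ∈ ℝ^r_{≥0} form a basis of ker(N), and for every k ∈ {1,…,ℓ} there exists an index j_k ∈ {1,…,r} such that j_k lies in the support of E^(k) but not in the support of any E^(i) with i ≠ k. Then every nonzero vector w ∈ C is a nonnegative linear combination of E^(1), …, E^(ℓ); moreover, a nonzero vector w ∈ C is support-minimal in C (i.e., for all nonzero v ∈ C, supp(v) ⊆ supp(w) implies supp(v) = supp(w)) if and only if w is a positive scalar multiple of some E^(k). -/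
/-- extreme vectors of the flux cone `C = ker N ∩ ℝ^r_{≥0}` from a
nonnegative basis of `ker N` with the private-support condition. -/
theorem stmt0 {m r ℓ : ℕ} (N : Matrix (Fin m) (Fin r) ℝ)
    (E : Fin ℓ → Fin r → ℝ)
    (hEnonneg : ∀ k i, 0 ≤ E k i)
    (hEker : ∀ k, N.mulVec (E k) = 0)
    (hEindep : LinearIndependent ℝ E)
    (hEspan : ∀ w : Fin r → ℝ, N.mulVec w = 0 → w ∈ Submodule.span ℝ (Set.range E))
    (hsupp : ∀ k : Fin ℓ, ∃ j : Fin r, E k j ≠ 0 ∧ ∀ i : Fin ℓ, i ≠ k → E i j = 0) :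
    (∀ w : Fin r → ℝ, w ≠ 0 → N.mulVec w = 0 → (∀ i, 0 ≤ w i) →
        ∃ a : Fin ℓ → ℝ, (∀ k, 0 ≤ a k) ∧ w = ∑ k, a k • E k) ∧
    (∀ w : Fin r → ℝ, w ≠ 0 → N.mulVec w = 0 → (∀ i, 0 ≤ w i) →
        ((∀ v : Fin r → ℝ, v ≠ 0 → N.mulVec v = 0 → (∀ i, 0 ≤ v i) →
            {i | v i ≠ 0} ⊆ {i | w i ≠ 0} → {i | v i ≠ 0} = {i | w i ≠ 0}) ↔
          ∃ (k : Fin ℓ) (c : ℝ), 0 < c ∧ w = c • E k)) := by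
  classical
  choose j hj1 hj2 using hsupp
  have hjpos : ∀ k, 0 < E k (j k) := fun k =>
    lt_of_le_of_ne (hEnonneg k (j k)) (Ne.symm (hj1 k))
  have eval : ∀ (b : Fin ℓ → ℝ) (k : Fin ℓ),
      (∑ i, b i • E i) (j k) = b k * E k (j k) := by
    intro b k
    rw [Finset.sum_apply]
    have := Finset.sum_eq_single (s := Finset.univ)
      (f := fun i => (b i • E i) (j k)) k
      (fun i _ hik => by simp [hj2 k i hik])
      (fun h => absurd (Finset.mem_univ k) h)
    simpa using this
  have coeff : ∀ w : Fin r → ℝ, N.mulVec w = 0 → (∀ i, 0 ≤ w i) →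
      ∃ b : Fin ℓ → ℝ, (∀ k, 0 ≤ b k) ∧ w = ∑ k, b k • E k := by
    intro w hwker hwnn
    obtain ⟨b, hb⟩ := (Submodule.mem_span_range_iff_exists_fun ℝ).mp (hEspan w hwker)
    refine ⟨b, ?_, hb.symm⟩
    intro k
    have h : w (j k) = b k * E k (j k) := by rw [← hb, eval]
    have h2 : 0 ≤ b k * E k (j k) := h ▸ hwnn (j k)
    nlinarith [hjpos k]
  constructor
  · intro w _ hwker hwnn
    exact coeff w hwker hwnn
  · intro w hw0 hwker hwnn
    obtain ⟨b, hbnn, hb⟩ := coeff w hwker hwnn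
    constructor
    · intro hmin
      have hex : ∃ k, b k ≠ 0 := by
        by_contra h
        push_neg at h
        apply hw0
        rw [hb]
        funext i
        simp [h]
      obtain ⟨k, hk⟩ := hex
      have hkpos : 0 < b k := lt_of_le_of_ne (hbnn k) (Ne.symm hk)
      have hEk0 : E k ≠ 0 := by
        intro h
        exact hj1 k (by rw [h]; rfl)
      have hsub : {i | E k i ≠ 0} ⊆ {i | w i ≠ 0} := by
        intro i hi
        simp only [Set.mem_setOf_eq] at hi ⊢
        have hEki : 0 < E k i := lt_of_le_of_ne (hEnonneg k i) (Ne.symm hi)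
        have hle : b k * E k i ≤ w i := by
          rw [hb, Finset.sum_apply]
          exact Finset.single_le_sum
            (fun m _ => mul_nonneg (hbnn m) (hEnonneg m i)) (Finset.mem_univ k)
        nlinarith
      have hsupeq := hmin (E k) hEk0 (hEker k) (hEnonneg k) hsub
      have hbz : ∀ i, i ≠ k → b i = 0 := by
        intro i hik
        by_contra hbi
        have h1 : w (j i) = b i * E i (j i) := by rw [hb, eval]
        have h2 : w (j i) ≠ 0 := by
          rw [h1]; exact mul_ne_zero hbi (hj1 i)
        have h3 : (j i) ∈ {i | E k i ≠ 0} := by rw [hsupeq]; exact h2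
        exact h3 (hj2 i k (Ne.symm hik))
      refine ⟨k, b k, hkpos, ?_⟩
      rw [hb]
      exact Finset.sum_eq_single k
        (fun i _ hik => by rw [hbz i hik, zero_smul])
        (fun h => absurd (Finset.mem_univ k) h)
    · rintro ⟨k, c, hc, rfl⟩
      intro v hv0 hvker hvnn hvsub
      obtain ⟨d, hdnn, hd⟩ := coeff v hvker hvnn
      have hwz : ∀ i : Fin r, (c • E k) i ≠ 0 ↔ E k i ≠ 0 := by
        intro i
        simp [mul_ne_zero_iff, ne_of_gt hc]
      have hdz : ∀ i, i ≠ k → d i = 0 := by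
        intro i hik
        by_contra hdi
        have h1 : v (j i) = d i * E i (j i) := by rw [hd, eval]
        have h2 : (j i) ∈ {i | v i ≠ 0} := by
          simp only [Set.mem_setOf_eq, h1]
          exact mul_ne_zero hdi (hj1 i)
        have h3 := hvsub h2
        simp only [Set.mem_setOf_eq] at h3
        rw [hwz] at h3
        exact h3 (hj2 i k (Ne.symm hik))
      have hveq : v = d k • E k := by
        rw [hd]
        exact Finset.sum_eq_single k
          (fun i _ hik => by rw [hdz i hik, zero_smul])
          (fun h => absurd (Finset.mem_univ k) h)
      have hdk : d k ≠ 0 := by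
        intro h
        exact hv0 (by rw [hveq, h, zero_smul])
      ext i
      simp only [Set.mem_setOf_eq]
      rw [hveq, hwz i]
      simp [mul_ne_zero_iff, hdk]
end

section
/- Let K be a field, let M ∈ K^{s×m} be a matrix of full rank s with s ≤ m, and let D ∈ K^{m×d} (with d = m − s) be a matrix whose columns form a basis of ker(M) (so that M·D = 0 and D has trivial kernel). Then there exists a nonzero scalar δ ∈ K such that for every subset I ⊆ {1,…,m} with |I| = s, writing I^c = {1,…,m}∖I, one has δ · det([Dᵀ]_{[d],I^c}) = sgn(τ_I) · det([M]_{[s],I}), where [Dᵀ]_{[d],I^c} denotes the d×d submatrix of Dᵀ with columns indexed by I^c, [M]_{[s],I} denotes the s×s submatrix of M with columns indexed by I, and τ_I is the permutation sending (1,…,m) to (i_1,…,i_s, j_1,…,j_d) with I = {i_1<⋯<i_s} and I^c = {j_1<⋯<j_d}. -/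
/-!
Complete `M` to a square matrix `E = [M; N]` whose rows `N` span a complement of the row space
of `M`; then `N D` is invertible, because `E` is and `D` is injective. Let `W = [e_I | D]`, where
`e_I` consists of the columns of the identity indexed by `I`. Since `M D = 0`, `E W` is block
lower triangular with diagonal blocks `M_I` and `N D`, while `W` with its rows listed in the
order `τ` (first `I`, then `Iᶜ`) is block upper triangular with diagonal blocks `1` and `D_{Iᶜ}`.
Taking determinants, `sgn τ · det E · det D_{Iᶜ} = det M_I · det (N D)`, so
`δ = det E / det (N D)` works.
-/

open Matrix Equiv

namespace Matrix

variable {R K : Type*} [CommRing R] [Field K] {m₁ m₂ n : Type*}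

theorem mul_one_submatrix {l m : Type*} [Fintype n] [DecidableEq n] (M : Matrix m n R)
    (f : l → n) : M * (1 : Matrix n n R).submatrix id f = M.submatrix id f := by
  simpa using mul_submatrix_one (Equiv.refl n) f M

theorem det_submatrix_trans_perm {m : Type*} [Fintype m] [DecidableEq m] [Fintype n]
    [DecidableEq n] (A : Matrix m n R) (e : m ≃ n) (τ : Perm n) :
    (A.submatrix id (e.trans τ)).det = Perm.sign τ * (A.submatrix id e).det := by
  have hA : A.submatrix id (e.trans τ) =
      (A.submatrix id e).submatrix id ((e.trans τ).trans e.symm) := by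
    ext; simp
  rw [hA, det_permute', Perm.sign_trans_trans_symm]

theorem det_fromRows_submatrix_mul_det_submatrix [Fintype m₁] [Fintype m₂] [Fintype n]
    [DecidableEq m₁] [DecidableEq m₂] [DecidableEq n] (M : Matrix m₁ n R)
    (N : Matrix m₂ n R) (D : Matrix n m₂ R) (hMD : M * D = 0) (σ : m₁ ⊕ m₂ ≃ n) :
    ((fromRows M N).submatrix id σ).det * (D.submatrix (σ ∘ Sum.inr) id).det =
      (M.submatrix id (σ ∘ Sum.inl)).det * (N * D).det := by
  let W := fromCols ((1 : Matrix n n R).submatrix id (σ ∘ Sum.inl)) D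
  have hW : W.submatrix σ id =
      fromBlocks 1 (D.submatrix (σ ∘ Sum.inl) id) 0 (D.submatrix (σ ∘ Sum.inr) id) := by
    ext (i | i) (j | j) <;> simp [W, one_apply]
  have hWdet : (W.submatrix σ id).det = (D.submatrix (σ ∘ Sum.inr) id).det := by
    rw [hW, det_fromBlocks_zero₂₁, det_one, one_mul]
  have hprod : (fromRows M N).submatrix id σ * W.submatrix σ id =
      fromBlocks (M.submatrix id (σ ∘ Sum.inl)) 0 (N.submatrix id (σ ∘ Sum.inl)) (N * D) := by
    rw [submatrix_mul_equiv, submatrix_id_id, fromRows_mul_fromCols, hMD, mul_one_submatrix,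
      mul_one_submatrix]
  rw [← hWdet, ← det_mul, hprod, det_fromBlocks_zero₁₂]

theorem linearIndependent_row_of_rank_eq_card [Fintype m₁] [Fintype n] {M : Matrix m₁ n K}
    (hM : M.rank = Fintype.card m₁) : LinearIndependent K M.row := by
  rw [linearIndependent_iff_card_eq_finrank_span, Set.finrank, ← rank_eq_finrank_span_row, hM]

theorem det_submatrix_ne_zero_of_linearIndependent_row {m : Type*} [Fintype m] [DecidableEq m]
    {A : Matrix m n K} (hA : LinearIndependent K A.row) (e : m ≃ n) :
    (A.submatrix id e).det ≠ 0 := by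
  have hrows : LinearIndependent K (A.submatrix id e).row :=
    hA.map' (LinearEquiv.funCongrLeft K K e).toLinearMap (LinearEquiv.ker _)
  exact ((isUnit_iff_isUnit_det _).mp (linearIndependent_rows_iff_isUnit.mp hrows)).ne_zero

theorem exists_linearIndependent_row_fromRows [Fintype m₁] [Fintype m₂] [Fintype n]
    {M : Matrix m₁ n K} (hM : LinearIndependent K M.row)
    (hcard : Fintype.card m₁ + Fintype.card m₂ = Fintype.card n) :
    ∃ N : Matrix m₂ n K, LinearIndependent K (fromRows M N).row := by
  obtain ⟨W, hW⟩ := Submodule.exists_isCompl (Submodule.span K (Set.range M.row))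
  have hfinrank : Module.finrank K W = Fintype.card m₂ := by
    have := Submodule.finrank_add_eq_of_isCompl hW
    rw [finrank_span_eq_card hM, Module.finrank_fintype_fun_eq_card] at this
    omega
  let b : Module.Basis m₂ K W :=
    (Module.finBasisOfFinrankEq K W hfinrank).reindex (Fintype.equivFin m₂).symm
  have hdisj : Disjoint (Submodule.span K (Set.range M.row))
      (Submodule.span K (Set.range (W.subtype ∘ b))) := by
    rw [Set.range_comp, ← Submodule.map_span, b.span_eq, Submodule.map_top,
      Submodule.range_subtype]
    exact hW.disjoint
  exact ⟨W.subtype ∘ b, hM.sum_type (b.linearIndependent.map' W.subtype W.ker_subtype) hdisj⟩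

theorem det_mul_ne_zero_of_det_fromRows_submatrix_ne_zero [Fintype m₁] [Fintype m₂]
    [Fintype n] [DecidableEq m₁] [DecidableEq m₂] {M : Matrix m₁ n K} {N : Matrix m₂ n K}
    {D : Matrix n m₂ K} (hMD : M * D = 0) (hD : LinearIndependent K D.col) (σ : m₁ ⊕ m₂ ≃ n)
    (hE : ((fromRows M N).submatrix id σ).det ≠ 0) : (N * D).det ≠ 0 := by
  intro hND
  obtain ⟨c, hc, hNDc⟩ := exists_mulVec_eq_zero_iff.mpr hND
  have hDc : D *ᵥ c ≠ 0 := fun h => hc (mulVec_injective_iff.mpr hD (by rw [h, mulVec_zero]))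
  refine hE (exists_mulVec_eq_zero_iff.mp ⟨(D *ᵥ c) ∘ σ, fun h => hDc ?_, ?_⟩)
  · ext i
    simpa using congrFun h (σ.symm i)
  · rw [submatrix_mulVec_equiv]
    simp [Function.comp_assoc, mulVec_mulVec, hMD, hNDc]

end Matrix

theorem stmt1_general {K : Type*} [Field K] {s d : ℕ}
    (M : Matrix (Fin s) (Fin (s + d)) K)
    (D : Matrix (Fin (s + d)) (Fin d) K)
    (hrank : M.rank = s)
    (hMD : M * D = 0)
    (hDindep : LinearIndependent K fun j : Fin d => fun i : Fin (s + d) => D i j) :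
    ∃ δ : K, δ ≠ 0 ∧
      ∀ (I : Finset (Fin (s + d))) (hI : I.card = s) (hIc : Iᶜ.card = d)
        (τ : Equiv.Perm (Fin (s + d))),
        (∀ k : Fin s, τ (Fin.castAdd d k) = (I.orderIsoOfFin hI k : Fin (s + d))) →
        (∀ k : Fin d, τ (Fin.natAdd s k) = (Iᶜ.orderIsoOfFin hIc k : Fin (s + d))) →
        δ * (D.transpose.submatrix id fun c : Fin d =>
              (Iᶜ.orderIsoOfFin hIc c : Fin (s + d))).det
          = ((Equiv.Perm.sign τ : ℤ) : K) *
            (M.submatrix id fun c : Fin s => (I.orderIsoOfFin hI c : Fin (s + d))).det := by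
  have hMrows : LinearIndependent K M.row :=
    linearIndependent_row_of_rank_eq_card (by rw [hrank, Fintype.card_fin])
  obtain ⟨N, hN⟩ := exists_linearIndependent_row_fromRows (m₂ := Fin d) hMrows (by simp)
  set E := (fromRows M N).submatrix id finSumFinEquiv
  have hE : E.det ≠ 0 := det_submatrix_ne_zero_of_linearIndependent_row hN _
  have hND : (N * D).det ≠ 0 :=
    det_mul_ne_zero_of_det_fromRows_submatrix_ne_zero hMD hDindep _ hE
  refine ⟨E.det / (N * D).det, div_ne_zero hE hND, fun I hI hIc τ hτI hτIc => ?_⟩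
  set f : Fin s → Fin (s + d) := fun c => I.orderIsoOfFin hI c
  set g : Fin d → Fin (s + d) := fun c => Iᶜ.orderIsoOfFin hIc c
  have key := det_fromRows_submatrix_mul_det_submatrix M N D hMD (finSumFinEquiv.trans τ)
  have hf : ⇑(finSumFinEquiv.trans τ) ∘ Sum.inl = f := funext hτI
  have hg : ⇑(finSumFinEquiv.trans τ) ∘ Sum.inr = g := funext hτIc
  rw [det_submatrix_trans_perm, hf, hg] at key
  have hsign : ((Perm.sign τ : ℤ) : K) * ((Perm.sign τ : ℤ) : K) = 1 := by
    rw [← Int.cast_mul, ← Units.val_mul, Int.units_mul_self, Units.val_one, Int.cast_one]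
  rw [← transpose_submatrix, det_transpose, div_mul_eq_mul_div, div_eq_iff hND]
  linear_combination ((Perm.sign τ : ℤ) : K) * key - E.det * (D.submatrix g id).det * hsign

/-- Gale duality for maximal minors.  `M` is a full-rank `s × (s+d)`
matrix over a field `K`, the columns of `D` form a basis of `ker M`.  Then there
is a nonzero scalar `δ` such that, for every `I` of cardinality `s`,
`δ · det([Dᵀ]_{[d],Iᶜ}) = sgn(τ_I) · det([M]_{[s],I})`, where `τ_I` is the
permutation listing `I` in increasing order followed by `Iᶜ` in increasing order. -/
theorem stmt1 {K : Type*} [Field K] {s d : ℕ}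
    (M : Matrix (Fin s) (Fin (s + d)) K)
    (D : Matrix (Fin (s + d)) (Fin d) K)
    (hrank : M.rank = s)
    (hMD : M * D = 0)
    (hDindep : LinearIndependent K fun j : Fin d => fun i : Fin (s + d) => D i j)
    (hDspan : ∀ v : Fin (s + d) → K, M.mulVec v = 0 → ∃ c : Fin d → K, v = D.mulVec c) :
    ∃ δ : K, δ ≠ 0 ∧
      ∀ (I : Finset (Fin (s + d))) (hI : I.card = s) (hIc : Iᶜ.card = d)
        (τ : Equiv.Perm (Fin (s + d))),
        (∀ k : Fin s, τ (Fin.castAdd d k) = (I.orderIsoOfFin hI k : Fin (s + d))) →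
        (∀ k : Fin d, τ (Fin.natAdd s k) = (Iᶜ.orderIsoOfFin hIc k : Fin (s + d))) →
        δ * (D.transpose.submatrix id fun c : Fin d =>
              (Iᶜ.orderIsoOfFin hIc c : Fin (s + d))).det
          = ((Equiv.Perm.sign τ : ℤ) : K) *
            (M.submatrix id fun c : Fin s => (I.orderIsoOfFin hI c : Fin (s + d))).det :=
  stmt1_general M D hrank hMD hDindep
end

section
/- For natural numbers d < m, let P ⊆ ℝ^m be a polytope whose vertex set is contained in the set of 0/1-vectors z_I (for I ⊆ {1,…,m} with |I| = d), where z_I has i-th coordinate 0 for i ∈ I and 1 for i ∉ I. If J₁, J₂ ⊆ {1,…,m} satisfy |J₁| = |J₂| = d, |J₁ ∩ J₂| = d − 1, and z_{J₁}, z_{J₂} ∈ P, then the segment Conv(z_{J₁}, z_{J₂}) is an edge (one-dimensional face) of P. -/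
/-- `z_I ∈ {0,1}^m`: zero on the coordinates in `I`, one elsewhere. -/
def zvec {m : ℕ} (I : Finset (Fin m)) : Fin m → ℝ := fun i => if i ∈ I then 0 else 1

open Finset

private lemma key_nat {m d : ℕ} (K : Finset (Fin m)) (a b : Fin m)
    (hK : K.card + 1 = d) (ha : a ∉ K) (hb : b ∉ K) (hab : a ≠ b)
    (I : Finset (Fin m)) (hI : I.card = d) :
    (2*(I∩K).card + (if a∈I then 1 else 0) + (if b∈I then 1 else 0) + 1 ≤ 2*d) ∧
    (2*(I∩K).card + (if a∈I then 1 else 0) + (if b∈I then 1 else 0) + 1 = 2*d →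
      I = K ∪ {a} ∨ I = K ∪ {b}) := by
  have hIK : (I∩K).card ≤ K.card := card_le_card inter_subset_right
  have haIK : a ∉ I ∩ K := fun h => ha (mem_inter.mp h).2
  have hbIK : b ∉ I ∩ K := fun h => hb (mem_inter.mp h).2
  have keyeq : ∀ c : Fin m, c ∉ K → c ∈ I → (I∩K).card + 1 = d → I = K ∪ {c} := by
    intro c hcK hcI hcard
    have hKI : I ∩ K = K := eq_of_subset_of_card_le inter_subset_right (by omega)
    have hsub : K ∪ {c} ⊆ I := by
      apply union_subset
      · rw [← hKI]; exact inter_subset_left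
      · simpa using hcI
    have hcard2 : (K ∪ {c}).card = d := by
      rw [card_union_of_disjoint (by simpa using hcK), card_singleton]; omega
    exact (eq_of_subset_of_card_le hsub (by omega)).symm
  by_cases hai : a ∈ I <;> by_cases hbi : b ∈ I
  · have hsub : insert a (insert b (I∩K)) ⊆ I := by
      intro x hx
      simp only [mem_insert] at hx
      rcases hx with rfl|rfl|hx
      · exact hai
      · exact hbi
      · exact (mem_inter.mp hx).1
    have hcard : (I∩K).card + 2 ≤ d := by
      have h := card_le_card hsub
      rw [card_insert_of_notMem (by simp [hab, hbIK, haIK]),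
        card_insert_of_notMem hbIK] at h
      omega
    simp only [hai, hbi, if_pos]
    omega
  · simp only [hai, hbi, if_pos, if_neg, ite_true, ite_false]
    refine ⟨by omega, fun h => Or.inl (keyeq a ha hai (by omega))⟩
  · simp only [hai, hbi, if_pos, if_neg, ite_true, ite_false]
    refine ⟨by omega, fun h => Or.inr (keyeq b hb hbi (by omega))⟩
  · simp only [hai, hbi, ite_false]
    omega

/-- if the vertex set of a polytope `P ⊆ ℝ^m` consists of vectors
`z_I` with `|I| = d < m`, and `z_{J₁}, z_{J₂} ∈ P` with `|J₁∩J₂| = d−1`, then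
`Conv(z_{J₁}, z_{J₂})` is an edge of `P`: a face cut out by a supporting
hyperplane, of dimension one (its endpoints are distinct). -/
theorem stmt3 {m d : ℕ} (hdm : d < m)
    (V : Set (Fin m → ℝ))
    (hV : V ⊆ {z | ∃ I : Finset (Fin m), I.card = d ∧ z = zvec I})
    (P : Set (Fin m → ℝ)) (hP : P = convexHull ℝ V)
    (J₁ J₂ : Finset (Fin m)) (h1 : J₁.card = d) (h2 : J₂.card = d)
    (hcap : (J₁ ∩ J₂).card + 1 = d)
    (hz1 : zvec J₁ ∈ P) (hz2 : zvec J₂ ∈ P) :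
    zvec J₁ ≠ zvec J₂ ∧
    ∃ (v : Fin m → ℝ) (a : ℝ),
      (∀ x ∈ P, ∑ i, v i * x i ≤ a) ∧
      {x ∈ P | ∑ i, v i * x i = a} = segment ℝ (zvec J₁) (zvec J₂) := by
  subst hP
  set K : Finset (Fin m) := J₁ ∩ J₂ with hKdef
  -- extract the two swap coordinates
  have hsd1 : (J₁ \ J₂).card = 1 := by
    have h := card_sdiff_add_card_inter J₁ J₂
    rw [← hKdef] at h; omega
  have hsd2 : (J₂ \ J₁).card = 1 := by
    have h := card_sdiff_add_card_inter J₂ J₁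
    rw [inter_comm, ← hKdef] at h; omega
  obtain ⟨a, haeq⟩ := card_eq_one.mp hsd1
  obtain ⟨b, hbeq⟩ := card_eq_one.mp hsd2
  have haJ1 : a ∈ J₁ ∧ a ∉ J₂ := by
    have : a ∈ J₁ \ J₂ := haeq ▸ mem_singleton_self a
    exact ⟨(mem_sdiff.mp this).1, (mem_sdiff.mp this).2⟩
  have hbJ2 : b ∈ J₂ ∧ b ∉ J₁ := by
    have : b ∈ J₂ \ J₁ := hbeq ▸ mem_singleton_self b
    exact ⟨(mem_sdiff.mp this).1, (mem_sdiff.mp this).2⟩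
  have hab : a ≠ b := fun h => hbJ2.2 (h ▸ haJ1.1)
  have haK : a ∉ K := fun h => haJ1.2 (mem_inter.mp h).2
  have hbK : b ∉ K := fun h => hbJ2.2 (mem_inter.mp h).1
  have hJ1eq : J₁ = K ∪ {a} := by
    have hsub : K ∪ {a} ⊆ J₁ := union_subset inter_subset_left (by simpa using haJ1.1)
    have : (K ∪ {a}).card = d := by
      rw [card_union_of_disjoint (by simpa using haK), card_singleton]; omega
    exact (eq_of_subset_of_card_le hsub (by omega)).symm
  have hJ2eq : J₂ = K ∪ {b} := by
    have hsub : K ∪ {b} ⊆ J₂ := union_subset inter_subset_right (by simpa using hbJ2.1)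
    have : (K ∪ {b}).card = d := by
      rw [card_union_of_disjoint (by simpa using hbK), card_singleton]; omega
    exact (eq_of_subset_of_card_le hsub (by omega)).symm
  -- distinctness
  have hne : zvec J₁ ≠ zvec J₂ := by
    intro h
    have := congrFun h a
    simp [zvec, haJ1.1, haJ1.2] at this
  refine ⟨hne, ?_⟩
  -- the weight vector
  set w : Fin m → ℝ := fun i =>
    if i ∈ K then 0 else if i = a then 1 else if i = b then 1 else 2 with hwdef
  set W : ℝ := ∑ i, w i with hWdef
  -- linear functional
  have hlin : IsLinearMap ℝ (fun x : Fin m → ℝ => ∑ i, w i * x i) :=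
    ⟨fun x y => by simp [mul_add, Finset.sum_add_distrib],
     fun c x => by simp [Finset.mul_sum, mul_left_comm]⟩
  set L : (Fin m → ℝ) →ₗ[ℝ] ℝ := IsLinearMap.mk' _ hlin with hLdef
  have hLapp : ∀ x, L x = ∑ i, w i * x i := fun x => rfl
  -- value of the functional on a zvec
  have hval : ∀ I : Finset (Fin m), L (zvec I) = W - ∑ i ∈ I, w i := by
    intro I
    rw [hLapp]
    have : ∀ i : Fin m, w i * zvec I i = w i - (if i ∈ I then w i else 0) := by
      intro i
      by_cases h : i ∈ I <;> simp [zvec, h]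
    rw [Finset.sum_congr rfl fun i _ => this i, Finset.sum_sub_distrib,
      Finset.sum_ite_mem, univ_inter, hWdef]
  have hsumw : ∀ I : Finset (Fin m), I.card = d →
      ∑ i ∈ I, w i = 2*(d:ℝ) -
        ((2*(I∩K).card + (if a∈I then 1 else 0) + (if b∈I then 1 else 0) : ℕ) : ℝ) := by
    intro I hI
    push_cast [apply_ite (Nat.cast : ℕ → ℝ)]
    have : ∀ i ∈ I, w i = 2 - (if i ∈ K then (2:ℝ) else 0)
        - (if i = a then (1:ℝ) else 0) - (if i = b then (1:ℝ) else 0) := by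
      intro i _
      rw [hwdef]
      by_cases h1 : i ∈ K
      · have h2 : i ≠ a := fun h => haK (h ▸ h1)
        have h3 : i ≠ b := fun h => hbK (h ▸ h1)
        simp [h1, h2, h3]
      · by_cases h2 : i = a
        · subst h2; simp [haK, hab]; try norm_num
        · by_cases h3 : i = b
          · subst h3; simp [hbK, Ne.symm hab]; try norm_num
          · simp [h1, h2, h3]; try norm_num
    rw [Finset.sum_congr rfl this, Finset.sum_sub_distrib, Finset.sum_sub_distrib,
      Finset.sum_sub_distrib, Finset.sum_ite_mem, Finset.sum_ite_eq' I a (fun _ => (1:ℝ)),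
      Finset.sum_ite_eq' I b (fun _ => (1:ℝ)), Finset.sum_const, Finset.sum_const, hI]
    push_cast
    ring
  -- key inequality and equality criterion on vertices
  have hkey : ∀ I : Finset (Fin m), I.card = d →
      L (zvec I) ≤ W - 1 ∧ (L (zvec I) = W - 1 → I = J₁ ∨ I = J₂) := by
    intro I hI
    obtain ⟨hle, heq⟩ := key_nat K a b hcap haK hbK hab I hI
    rw [hval, hsumw I hI]
    set n : ℕ := 2*(I∩K).card + (if a∈I then 1 else 0) + (if b∈I then 1 else 0) with hn
    constructor
    · have hle' : ((n + 1 : ℕ) : ℝ) ≤ ((2*d : ℕ) : ℝ) := Nat.cast_le.mpr hle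
      push_cast at hle'
      linarith
    · intro h
      have h'' : ((n + 1 : ℕ) : ℝ) = ((2*d : ℕ) : ℝ) := by push_cast; linarith
      have h' : n + 1 = 2*d := Nat.cast_injective h''
      rcases heq h' with h | h
      · exact Or.inl (hJ1eq ▸ h)
      · exact Or.inr (hJ2eq ▸ h)
  -- values at the two endpoints
  have hKJ1 : J₁ ∩ K = K := inter_eq_right.mpr (hKdef ▸ inter_subset_left)
  have hKJ2 : J₂ ∩ K = K := inter_eq_right.mpr (hKdef ▸ inter_subset_right)
  have hcR : ((K.card : ℝ)) + 1 = (d:ℝ) := by exact_mod_cast hcap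
  have hfz1 : L (zvec J₁) = W - 1 := by
    rw [hval, hsumw J₁ h1, hKJ1, if_pos haJ1.1, if_neg hbJ2.2]
    push_cast
    linarith
  have hfz2 : L (zvec J₂) = W - 1 := by
    rw [hval, hsumw J₂ h2, hKJ2, if_neg haJ1.2, if_pos hbJ2.1]
    push_cast
    linarith
  -- the half-space bound on all of P
  have hPbound : ∀ x ∈ convexHull ℝ V, L x ≤ W - 1 := by
    intro x hx
    have hconv : Convex ℝ {y : Fin m → ℝ | L y ≤ W - 1} := convex_halfSpace_le hlin (W - 1)
    have hsub : V ⊆ {y : Fin m → ℝ | L y ≤ W - 1} := by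
      intro y hy
      obtain ⟨I, hI, rfl⟩ := hV hy
      exact (hkey I hI).1
    exact convexHull_min hsub hconv hx
  refine ⟨w, W - 1, fun x hx => hPbound x hx, ?_⟩
  ext x
  simp only [Set.mem_setOf_eq]
  constructor
  · rintro ⟨hxP, hxval⟩
    have hxval' : L x = W - 1 := hxval
    rw [_root_.convexHull_eq] at hxP
    obtain ⟨ι, t, wt, z, hw0, hw1, hzV, hx⟩ := hxP
    rw [Finset.centerMass_eq_of_sum_1 _ _ hw1] at hx
    have hLsum : ∑ i ∈ t, wt i * L (z i) = W - 1 := by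
      rw [← hxval', ← hx, map_sum]
      simp [smul_eq_mul]
    have hzero : ∀ i ∈ t, wt i * ((W - 1) - L (z i)) = 0 := by
      rw [← Finset.sum_eq_zero_iff_of_nonneg]
      · have : ∑ i ∈ t, wt i * ((W - 1) - L (z i))
            = (W - 1) * (∑ i ∈ t, wt i) - ∑ i ∈ t, wt i * L (z i) := by
          rw [Finset.mul_sum, ← Finset.sum_sub_distrib]
          exact Finset.sum_congr rfl fun i _ => by ring
        rw [this, hw1, hLsum]; ring
      · intro i hi
        obtain ⟨I, hI, hzI⟩ := hV (hzV i hi)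
        have hle := (hkey I hI).1
        rw [← hzI] at hle
        nlinarith [hw0 i hi]
    have hmem : x ∈ convexHull ℝ {zvec J₁, zvec J₂} := by
      rw [← Finset.centerMass_eq_of_sum_1 _ _ hw1, ← Finset.centerMass_filter_ne_zero] at hx
      rw [← hx]
      apply Finset.centerMass_mem_convexHull
      · intro i hi
        exact hw0 i (Finset.mem_filter.mp hi).1
      · rw [Finset.sum_filter_ne_zero, hw1]; exact one_pos
      · intro i hi
        obtain ⟨hit, hwne⟩ := Finset.mem_filter.mp hi
        obtain ⟨I, hI, hzI⟩ := hV (hzV i hit)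
        have hz0 := hzero i hit
        have hLz : L (z i) = W - 1 := by
          rcases mul_eq_zero.mp hz0 with h | h
          · exact absurd h hwne
          · linarith [sub_eq_zero.mp h]
        rcases (hkey I hI).2 (by rw [← hzI]; exact hLz) with rfl | rfl
        · left; exact hzI
        · right; rw [hzI]; rfl
    rwa [convexHull_pair] at hmem
  · intro hx
    have hxP : x ∈ convexHull ℝ V :=
      (convex_convexHull ℝ V).segment_subset hz1 hz2 hx
    refine ⟨hxP, ?_⟩
    obtain ⟨u, t, hu, ht, hut, rfl⟩ := hx
    have : L (u • zvec J₁ + t • zvec J₂) = W - 1 := by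
      rw [map_add, map_smul, map_smul, smul_eq_mul, smul_eq_mul, hfz1, hfz2]
      linear_combination (W - 1) * hut
    exact this
end

section
/- Let J₁, J₂ ⊆ {1,…,m} with |J₁| = |J₂| = d, |J₁ ∩ J₂| = d − 1, say J₁ = (J₁∩J₂) ∪ {j₁} and J₂ = (J₁∩J₂) ∪ {j₂} with j₁ ≠ j₂. Define v = e_{j₁} + e_{j₂} + 2·Σ_{i ∈ (J₁∪J₂)^c} e_i ∈ ℝ^m. Then for every I ⊆ {1,…,m} with |I| = d, one has v·z_I = 2(m−d−1)+1 if I = J₁ or I = J₂, and v·z_I < 2(m−d−1)+1 otherwise. -/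
/-!
Since `v·z_I = ∑ v - ∑_{i ∈ I} v i` and `∑ v = 2 + 2 (m - d - 1)`, everything hinges on the
weight `∑_{i ∈ I} v i = [j₁ ∈ I] + [j₂ ∈ I] + 2 |I \ (J₁ ∪ J₂)|`. It is `1` for `I = J₁, J₂`.
Any other `d`-set `I` either leaves `J₁ ∪ J₂`, which costs `2`, or lies in
`J₁ ∪ J₂ = J₁ ∩ J₂ ∪ {j₁, j₂}` and then contains both `j₁` and `j₂`, since
`(J₁ ∪ J₂) \ {j₁} = J₂` and `(J₁ ∪ J₂) \ {j₂} = J₁`.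
-/

open Finset

lemma sum_mul_zvec {m : ℕ} (v : Fin m → ℝ) (I : Finset (Fin m)) :
    ∑ i, v i * zvec I i = ∑ i, v i - ∑ i ∈ I, v i := by
  have hterm (i : Fin m) : v i * zvec I i = v i - if i ∈ I then v i else 0 := by
    unfold zvec; split_ifs <;> ring
  simp only [hterm, sum_sub_distrib, sum_ite_mem, univ_inter]

lemma sum_weights {α : Type*} [Fintype α] [DecidableEq α] (a b : α) (U S : Finset α) :
    ∑ i ∈ S, ((if i = a then 1 else 0) + (if i = b then 1 else 0) + (if i ∈ Uᶜ then 2 else 0) : ℝ)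
      = (if a ∈ S then 1 else 0) + (if b ∈ S then 1 else 0) + 2 * #(S \ U) := by
  rw [sum_add_distrib, sum_add_distrib, sum_ite_eq', sum_ite_eq', sum_ite_mem, sum_const,
    nsmul_eq_mul, mul_comm, ← sdiff_eq_inter_compl]

section

variable {α : Type*} [DecidableEq α] {J₁ J₂ I : Finset α} {j₁ : α}

lemma mem_sdiff_of_card_inter_add_one (hJ : J₁ = J₁ ∩ J₂ ∪ {j₁})
    (hcard : #(J₁ ∩ J₂) + 1 = #J₁) : j₁ ∈ J₁ \ J₂ := by
  have hj : j₁ ∉ J₁ ∩ J₂ := by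
    intro hj
    rw [union_eq_left.2 (singleton_subset_iff.2 hj)] at hJ
    rw [← hJ] at hcard
    omega
  have hjJ₁ : j₁ ∈ J₁ := hJ ▸ mem_union_right _ (mem_singleton_self _)
  exact mem_sdiff.2 ⟨hjJ₁, fun hjJ₂ => hj (mem_inter.2 ⟨hjJ₁, hjJ₂⟩)⟩

lemma subset_of_subset_union_of_notMem (hJ : J₁ = J₁ ∩ J₂ ∪ {j₁}) (hI : I ⊆ J₁ ∪ J₂)
    (hj : j₁ ∉ I) : I ⊆ J₂ := by
  intro i hi
  rcases mem_union.1 (hI hi) with hiJ₁ | hiJ₂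
  · rw [hJ, mem_union, mem_singleton] at hiJ₁
    rcases hiJ₁ with hiK | rfl
    · exact mem_of_mem_inter_right hiK
    · exact absurd hi hj
  · exact hiJ₂

lemma mem_of_subset_union_of_ne (hJ : J₁ = J₁ ∩ J₂ ∪ {j₁}) (hI : I ⊆ J₁ ∪ J₂)
    (hcard : #J₂ ≤ #I) (hne : I ≠ J₂) : j₁ ∈ I := by
  by_contra hj
  exact hne (eq_of_subset_of_card_le (subset_of_subset_union_of_notMem hJ hI hj) hcard)

lemma two_le_weight {j₂ : α} (hJ₁ : J₁ = J₁ ∩ J₂ ∪ {j₁}) (hJ₂ : J₂ = J₂ ∩ J₁ ∪ {j₂})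
    (hcard₁ : #J₁ ≤ #I) (hcard₂ : #J₂ ≤ #I) (hne₁ : I ≠ J₁) (hne₂ : I ≠ J₂) :
    (2 : ℝ) ≤ (if j₁ ∈ I then 1 else 0) + (if j₂ ∈ I then 1 else 0) + 2 * #(I \ (J₁ ∪ J₂)) := by
  by_cases hI : I ⊆ J₁ ∪ J₂
  · rw [if_pos (mem_of_subset_union_of_ne hJ₁ hI hcard₂ hne₂),
      if_pos (mem_of_subset_union_of_ne hJ₂ (union_comm J₁ J₂ ▸ hI) hcard₁ hne₁)]
    norm_num
  · have hout : (1 : ℝ) ≤ #(I \ (J₁ ∪ J₂)) := by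
      exact_mod_cast card_pos.2 (sdiff_nonempty.2 hI)
    split_ifs <;> linarith

end

theorem stmt4_general {m d : ℕ} (J₁ J₂ : Finset (Fin m))
    (h1 : J₁.card = d) (h2 : J₂.card = d)
    (j₁ j₂ : Fin m)
    (hJ1 : J₁ = (J₁ ∩ J₂) ∪ {j₁}) (hJ2 : J₂ = (J₁ ∩ J₂) ∪ {j₂})
    (hcap : (J₁ ∩ J₂).card + 1 = d)
    (v : Fin m → ℝ)
    (hv : v = fun i => (if i = j₁ then 1 else 0) + (if i = j₂ then 1 else 0)
        + (if i ∈ (J₁ ∪ J₂)ᶜ then 2 else 0)) :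
    ∀ I : Finset (Fin m), I.card = d →
      ((I = J₁ ∨ I = J₂) → ∑ i, v i * zvec I i = 2 * ((m : ℝ) - d - 1) + 1) ∧
      (I ≠ J₁ → I ≠ J₂ → ∑ i, v i * zvec I i < 2 * ((m : ℝ) - d - 1) + 1) := by
  have hJ2' : J₂ = J₂ ∩ J₁ ∪ {j₂} := by rwa [inter_comm]
  obtain ⟨hj₁J₁, hj₁J₂⟩ := mem_sdiff.1 (mem_sdiff_of_card_inter_add_one hJ1 (h1 ▸ hcap))
  obtain ⟨hj₂J₂, hj₂J₁⟩ :=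
    mem_sdiff.1 (mem_sdiff_of_card_inter_add_one hJ2' (by rw [inter_comm, hcap, h2]))
  have hU : #(J₁ ∪ J₂) = d + 1 := by have := card_union_add_card_inter J₁ J₂; omega
  have hm : d + 1 ≤ m := by simpa [hU] using card_le_univ (J₁ ∪ J₂)
  have htotal : ∑ i, v i = 2 * ((m : ℝ) - d - 1) + 2 := by
    rw [hv, sum_weights, card_univ_sdiff, hU, Fintype.card_fin, Nat.cast_sub hm]
    simp only [mem_univ, if_true]
    push_cast
    ring
  intro I hI
  rw [sum_mul_zvec, htotal, hv, sum_weights]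
  refine ⟨?_, fun hne₁ hne₂ => ?_⟩
  · rintro (rfl | rfl)
    · simp only [hj₁J₁, hj₂J₁, sdiff_eq_empty_iff_subset.2 subset_union_left, if_true,
        if_false, card_empty, Nat.cast_zero]
      ring
    · simp only [hj₂J₂, hj₁J₂, sdiff_eq_empty_iff_subset.2 subset_union_right, if_true,
        if_false, card_empty, Nat.cast_zero]
      ring
  · linarith [two_le_weight hJ1 hJ2' (h1 ▸ hI.ge) (h2 ▸ hI.ge) hne₁ hne₂]

/-- with `J₁ = (J₁∩J₂) ∪ {j₁}`, `J₂ = (J₁∩J₂) ∪ {j₂}`, `j₁ ≠ j₂`,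
`|J₁| = |J₂| = d`, `|J₁∩J₂| = d−1`, and `v = e_{j₁} + e_{j₂} + 2·Σ_{i∈(J₁∪J₂)ᶜ} e_i`,
for every `I` with `|I| = d` one has `v·z_I = 2(m−d−1)+1` if `I ∈ {J₁, J₂}` and
`v·z_I < 2(m−d−1)+1` otherwise. -/
theorem stmt4 {m d : ℕ} (J₁ J₂ : Finset (Fin m))
    (h1 : J₁.card = d) (h2 : J₂.card = d)
    (j₁ j₂ : Fin m) (hne : j₁ ≠ j₂)
    (hJ1 : J₁ = (J₁ ∩ J₂) ∪ {j₁}) (hJ2 : J₂ = (J₁ ∩ J₂) ∪ {j₂})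
    (hcap : (J₁ ∩ J₂).card + 1 = d)
    (v : Fin m → ℝ)
    (hv : v = fun i => (if i = j₁ then 1 else 0) + (if i = j₂ then 1 else 0)
        + (if i ∈ (J₁ ∪ J₂)ᶜ then 2 else 0)) :
    ∀ I : Finset (Fin m), I.card = d →
      ((I = J₁ ∨ I = J₂) → ∑ i, v i * zvec I i = 2 * ((m : ℝ) - d - 1) + 1) ∧
      (I ≠ J₁ → I ≠ J₂ → ∑ i, v i * zvec I i < 2 * ((m : ℝ) - d - 1) + 1) :=
  stmt4_general J₁ J₂ h1 h2 j₁ j₂ hJ1 hJ2 hcap v hv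
end

section
/- Let pr₁: ℝ^m × ℝ^ℓ → ℝ^m and pr₂: ℝ^m × ℝ^ℓ → ℝ^ℓ be the coordinate projections. Let P ⊆ ℝ^m × ℝ^ℓ be a polytope, let x₁, x₂ be vertices of pr₁(P), and let y be a vertex of pr₂(P). If Conv(x₁, x₂) is an edge of pr₁(P) such that pr₁(Vertex(P)) ∩ Conv(x₁, x₂) = {x₁, x₂}, and (x₁, y), (x₂, y) ∈ P, then Conv((x₁,y), (x₂,y)) is an edge of P. -/
/-!
Let `φ ≤ a` expose the edge `[x₁, x₂]` of `pr₁ P`. The vertices of `P` on the face `φ ∘ pr₁ = a`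
lie over `x₁` or `x₂`, and since `y` is a vertex of `pr₂ P` some functional `f` separates `y` from
the second coordinates of the other vertices of that face. For `c` large enough the functional
`c φ(pr₁ z) + f(pr₂ z)` then attains its maximum over the vertices of `P` exactly at `(x₁, y)` and
`(x₂, y)`, so it exposes their segment.
-/

open Set

theorem Set.Finite.convexHull_extremePoints_convexHull {E : Type*} [NormedAddCommGroup E]
    [NormedSpace ℝ E] {S : Set E} (hS : S.Finite) :
    convexHull ℝ ((convexHull ℝ S).extremePoints ℝ) = convexHull ℝ S := by
  have hfin : ((convexHull ℝ S).extremePoints ℝ).Finite :=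
    hS.subset extremePoints_convexHull_subset
  rw [← (hfin.isClosed_convexHull ℝ).closure_eq]
  exact closure_convexHull_extremePoints (hS.isCompact_convexHull ℝ) (convex_convexHull ℝ S)

theorem Finset.mem_convexHull_sep_eq_of_le {𝕜 V : Type*} [Field 𝕜] [LinearOrder 𝕜]
    [IsStrictOrderedRing 𝕜] [AddCommGroup V] [Module 𝕜 V] {s : Finset V} {g : V →ₗ[𝕜] 𝕜}
    {b : 𝕜} (hb : ∀ e ∈ s, g e ≤ b) {z : V} (hz : z ∈ convexHull 𝕜 (s : Set V))
    (hgz : g z = b) : z ∈ convexHull 𝕜 {e ∈ (s : Set V) | g e = b} := by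
  rw [Finset.convexHull_eq] at hz
  obtain ⟨w, hw₀, hw₁, rfl⟩ := hz
  have hslack : ∑ e ∈ s, w e * (b - g e) = 0 := by
    simp only [mul_sub, Finset.sum_sub_distrib, ← Finset.sum_mul, hw₁, one_mul, ← hgz,
      s.centerMass_eq_of_sum_1 _ hw₁, map_sum, map_smul, smul_eq_mul, id, sub_self]
  have htight : ∀ e ∈ s, w e ≠ 0 → g e = b := fun e he hwe => by
    have := (Finset.sum_eq_zero_iff_of_nonneg fun e he =>
      mul_nonneg (hw₀ e he) (sub_nonneg.2 (hb e he))).1 hslack e he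
    linarith [(mul_eq_zero.1 this).resolve_left hwe]
  rw [← s.centerMass_filter_ne_zero]
  refine (s.filter (w · ≠ 0)).centerMass_mem_convexHull (fun e he => hw₀ e (s.filter_subset _ he))
    (by rw [Finset.sum_filter_ne_zero, hw₁]; exact one_pos) fun e he => ?_
  obtain ⟨he, hwe⟩ := Finset.mem_filter.1 he
  exact ⟨he, htight e he hwe⟩

theorem convexHull_face_eq_segment_of_forall_lt {V : Type*} [AddCommGroup V] [Module ℝ V]
    {E : Set V} (hE : E.Finite) {G : V →ₗ[ℝ] ℝ} {b : ℝ} {p q : V} (hp : G p = b) (hq : G q = b)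
    (hpE : p ∈ convexHull ℝ E) (hqE : q ∈ convexHull ℝ E)
    (hGE : ∀ e ∈ E, G e < b ∨ e = p ∨ e = q) :
    (∀ z ∈ convexHull ℝ E, G z ≤ b) ∧ {z ∈ convexHull ℝ E | G z = b} = segment ℝ p q := by
  have hle : ∀ e ∈ E, G e ≤ b := fun e he => by
    rcases hGE e he with h | rfl | rfl
    exacts [h.le, hp.le, hq.le]
  refine ⟨fun z hz => convexHull_min hle (convex_halfSpace_le G.isLinear b) hz, ?_⟩
  apply Subset.antisymm
  · rintro z ⟨hz, hGz⟩
    rw [← hE.coe_toFinset] at hz hle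
    rw [← convexHull_pair]
    refine convexHull_mono ?_ (Finset.mem_convexHull_sep_eq_of_le hle hz hGz)
    rintro e ⟨he, hGe⟩
    rw [hE.coe_toFinset] at he
    simpa [hGe] using hGE e he
  · exact subset_inter ((convex_convexHull ℝ E).segment_subset hpE hqE)
      ((convex_hyperplane G.isLinear b).segment_subset hp hq)

theorem exists_forall_lt_of_mem_extremePoints {F : Type*} [NormedAddCommGroup F]
    [NormedSpace ℝ F] {K T : Set F} {y : F} (hK : Convex ℝ K) (hy : y ∈ K.extremePoints ℝ)
    (hT : T.Finite) (hTK : T ⊆ K) (hyT : y ∉ T) : ∃ f : StrongDual ℝ F, ∀ t ∈ T, f t < f y := by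
  have hyT' : y ∉ convexHull ℝ T := fun hyT' => hyT <| extremePoints_convexHull_subset <|
    inter_extremePoints_subset_extremePoints_of_subset (convexHull_min hTK hK) ⟨hyT', hy⟩
  obtain ⟨f, u, hfu, huy⟩ :=
    geometric_hahn_banach_closed_point (convex_convexHull ℝ T) (hT.isClosed_convexHull ℝ) hyT'
  exact ⟨f, fun t ht => (hfu t (subset_convexHull ℝ T ht)).trans huy⟩

theorem Set.Finite.exists_forall_mul_add_lt {α : Type*} {s : Set α} (hs : s.Finite)
    (φ ψ : α → ℝ) (a β : ℝ) : ∃ c : ℝ, ∀ e ∈ s, φ e < a → c * φ e + ψ e < c * a + β := by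
  have h : ∀ e ∈ s, ∀ᶠ c in Filter.atTop, φ e < a → c * φ e + ψ e < c * a + β := by
    intro e _
    by_cases he : φ e < a
    · filter_upwards [(Filter.tendsto_id.atTop_mul_const (sub_pos.2 he)).eventually_gt_atTop
        (ψ e - β)] with c hc _
      rw [id, mul_sub] at hc
      linarith
    · exact Filter.Eventually.of_forall fun _ h => absurd h he
  exact (hs.eventually_all.2 h).exists

theorem exists_linearMap_exposes_segment_of_fst_edge {E F : Type*} [NormedAddCommGroup E]
    [NormedSpace ℝ E] [NormedAddCommGroup F] [NormedSpace ℝ F] {S : Set (E × F)}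
    (hS : S.Finite) {x₁ x₂ : E} {y : F} (φ : E →ₗ[ℝ] ℝ) (a : ℝ)
    (hy : y ∈ (Prod.snd '' convexHull ℝ S).extremePoints ℝ)
    (hφ : ∀ x ∈ Prod.fst '' convexHull ℝ S, φ x ≤ a)
    (hface : {x ∈ Prod.fst '' convexHull ℝ S | φ x = a} = segment ℝ x₁ x₂)
    (hvert : Prod.fst '' (convexHull ℝ S).extremePoints ℝ ∩ segment ℝ x₁ x₂ = {x₁, x₂})
    (h₁ : (x₁, y) ∈ convexHull ℝ S) (h₂ : (x₂, y) ∈ convexHull ℝ S) :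
    ∃ (G : E × F →ₗ[ℝ] ℝ) (b : ℝ), (∀ z ∈ convexHull ℝ S, G z ≤ b) ∧
      {z ∈ convexHull ℝ S | G z = b} = segment ℝ (x₁, y) (x₂, y) := by
  set P := convexHull ℝ S
  set V := P.extremePoints ℝ
  have hVfin : V.Finite := hS.subset extremePoints_convexHull_subset
  have hVP : convexHull ℝ V = P := hS.convexHull_extremePoints_convexHull
  have hφx : ∀ x ∈ segment ℝ x₁ x₂, φ x = a := fun x hx => by
    rw [← hface] at hx
    exact hx.2
  have hover : ∀ e ∈ V, φ e.1 = a → e.1 = x₁ ∨ e.1 = x₂ := fun e he hea => by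
    have hseg : e.1 ∈ segment ℝ x₁ x₂ := hface ▸ ⟨mem_image_of_mem _ (extremePoints_subset he), hea⟩
    have : e.1 ∈ ({x₁, x₂} : Set E) := hvert ▸ ⟨mem_image_of_mem _ he, hseg⟩
    exact this
  obtain ⟨f, hf⟩ := exists_forall_lt_of_mem_extremePoints
    (T := Prod.snd '' {e ∈ V | φ e.1 = a} \ {y})
    ((convex_convexHull ℝ S).linear_image (LinearMap.snd ℝ E F)) hy
    ((hVfin.sep _).image Prod.snd |>.sdiff) (sdiff_subset.trans <| image_mono <|
      (sep_subset _ _).trans extremePoints_subset) (fun h => h.2 rfl)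
  obtain ⟨c, hc⟩ := hVfin.exists_forall_mul_add_lt (fun e => φ e.1) (fun e => f e.2) a (f y)
  refine ⟨c • φ ∘ₗ LinearMap.fst ℝ E F + (f : F →ₗ[ℝ] ℝ) ∘ₗ LinearMap.snd ℝ E F, c * a + f y,
    hVP ▸ convexHull_face_eq_segment_of_forall_lt hVfin ?_ ?_ (hVP ▸ h₁) (hVP ▸ h₂) ?_⟩
  · simp [hφx x₁ (left_mem_segment ℝ x₁ x₂)]
  · simp [hφx x₂ (right_mem_segment ℝ x₁ x₂)]
  intro e he
  simp only [LinearMap.add_apply, LinearMap.smul_apply, LinearMap.coe_comp, Function.comp_apply,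
    LinearMap.fst_apply, LinearMap.snd_apply, ContinuousLinearMap.coe_coe, smul_eq_mul]
  rcases (hφ e.1 (mem_image_of_mem _ (extremePoints_subset he))).lt_or_eq with hlt | hea
  · exact .inl (hc e he hlt)
  by_cases he₂ : e.2 = y
  · rcases hover e he hea with h | h
    exacts [.inr (.inl (Prod.ext h he₂)), .inr (.inr (Prod.ext h he₂))]
  · left
    rw [hea]
    linarith [hf e.2 ⟨⟨e, ⟨he, hea⟩, rfl⟩, he₂⟩]

theorem exists_dotProduct_add_dotProduct_eq {R ι κ : Type*} [CommSemiring R] [Fintype ι]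
    [DecidableEq ι] [Fintype κ] [DecidableEq κ] (G : (ι → R) × (κ → R) →ₗ[R] R) :
    ∃ w : (ι → R) × (κ → R), ∀ z, w.1 ⬝ᵥ z.1 + w.2 ⬝ᵥ z.2 = G z := by
  refine ⟨((dotProductEquiv R ι).symm (G ∘ₗ LinearMap.inl R _ _),
    (dotProductEquiv R κ).symm (G ∘ₗ LinearMap.inr R _ _)), fun z => ?_⟩
  simp only [← dotProductEquiv_apply_apply, LinearEquiv.apply_symm_apply, LinearMap.comp_apply,
    LinearMap.inl_apply, LinearMap.inr_apply, ← map_add, Prod.mk_add_mk, add_zero, zero_add]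

theorem stmt5_general {m ℓ : ℕ}
    (S : Set ((Fin m → ℝ) × (Fin ℓ → ℝ))) (hSfin : S.Finite)
    (P : Set ((Fin m → ℝ) × (Fin ℓ → ℝ))) (hP : P = convexHull ℝ S)
    (x₁ x₂ : Fin m → ℝ) (y : Fin ℓ → ℝ)
    (hy : y ∈ Set.extremePoints ℝ (Prod.snd '' P))
    (hedge : ∃ (v : Fin m → ℝ) (a : ℝ),
        (∀ x ∈ Prod.fst '' P, ∑ i, v i * x i ≤ a) ∧
        {x ∈ Prod.fst '' P | ∑ i, v i * x i = a} = segment ℝ x₁ x₂)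
    (hvert : (Prod.fst '' Set.extremePoints ℝ P) ∩ segment ℝ x₁ x₂ = {x₁, x₂})
    (h1 : (x₁, y) ∈ P) (h2 : (x₂, y) ∈ P) :
    ∃ (w : (Fin m → ℝ) × (Fin ℓ → ℝ)) (b : ℝ),
      (∀ z ∈ P, (∑ i, w.1 i * z.1 i) + (∑ j, w.2 j * z.2 j) ≤ b) ∧
      {z ∈ P | (∑ i, w.1 i * z.1 i) + (∑ j, w.2 j * z.2 j) = b}
        = segment ℝ (x₁, y) (x₂, y) := by
  subst hP
  obtain ⟨v, a, hva, hface⟩ := hedge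
  obtain ⟨G, b, hGle, hGface⟩ := exists_linearMap_exposes_segment_of_fst_edge hSfin
    (dotProductEquiv ℝ (Fin m) v) a hy hva hface hvert h1 h2
  obtain ⟨w, hw⟩ := exists_dotProduct_add_dotProduct_eq G
  simp only [dotProduct] at hw
  exact ⟨w, b, by simpa only [hw] using hGle, by simpa only [hw] using hGface⟩

/-- lifting an edge of the projection of a polytope.  If
`Conv(x₁,x₂)` is an edge of `pr₁(P)` whose intersection with the projections of
the vertices (extreme points) of `P` is exactly `{x₁,x₂}`, `y` is a vertex of
`pr₂(P)`, and `(x₁,y), (x₂,y) ∈ P`, then `Conv((x₁,y),(x₂,y))` is an edge of `P`. -/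
theorem stmt5 {m ℓ : ℕ}
    (S : Set ((Fin m → ℝ) × (Fin ℓ → ℝ))) (hSfin : S.Finite)
    (P : Set ((Fin m → ℝ) × (Fin ℓ → ℝ))) (hP : P = convexHull ℝ S)
    (x₁ x₂ : Fin m → ℝ) (y : Fin ℓ → ℝ) (hne : x₁ ≠ x₂)
    (hx₁ : x₁ ∈ Set.extremePoints ℝ (Prod.fst '' P))
    (hx₂ : x₂ ∈ Set.extremePoints ℝ (Prod.fst '' P))
    (hy : y ∈ Set.extremePoints ℝ (Prod.snd '' P))
    (hedge : ∃ (v : Fin m → ℝ) (a : ℝ),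
        (∀ x ∈ Prod.fst '' P, ∑ i, v i * x i ≤ a) ∧
        {x ∈ Prod.fst '' P | ∑ i, v i * x i = a} = segment ℝ x₁ x₂)
    (hvert : (Prod.fst '' Set.extremePoints ℝ P) ∩ segment ℝ x₁ x₂ = {x₁, x₂})
    (h1 : (x₁, y) ∈ P) (h2 : (x₂, y) ∈ P) :
    ∃ (w : (Fin m → ℝ) × (Fin ℓ → ℝ)) (b : ℝ),
      (∀ z ∈ P, (∑ i, w.1 i * z.1 i) + (∑ j, w.2 j * z.2 j) ≤ b) ∧
      {z ∈ P | (∑ i, w.1 i * z.1 i) + (∑ j, w.2 j * z.2 j) = b}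
        = segment ℝ (x₁, y) (x₂, y) :=
  stmt5_general S hSfin P hP x₁ x₂ y hy hedge hvert h1 h2
end

section
/- Let f: ℝ^m_{>0} → ℝ be given by f(x) = Σ_{μ ∈ σ(f)} c_μ x^μ with all c_μ ≠ 0 and σ(f) ⊆ ℤ^m finite. Suppose there exist v ∈ ℝ^m∖{0} and a ∈ ℝ such that every negative exponent vector μ ∈ σ₋(f) satisfies v·μ ≥ a, every positive exponent vector μ ∈ σ₊(f) satisfies v·μ ≤ a, and there exists μ₀ ∈ σ₋(f) with v·μ₀ > a (a strict separating hyperplane). Then for every x ∈ ℝ^m_{>0} the univariate function t ↦ f(t^{v_1}x_1,…,t^{v_m}x_m), for t > 0, has at most one sign change in its (generalized) coefficient sequence when ordered by the exponents v·μ, with the term of highest exponent having negative coefficient; in particular, for every x ∈ ℝ^m_{>0}, f(t^v ∗ x) < 0 for all sufficiently large t > 0. -/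
open scoped Classical

lemma stmt6_aux_prod {m : ℕ} (v : Fin m → ℝ) (x : Fin m → ℝ) (hx : ∀ i, 0 < x i)
    (μ : Fin m → ℤ) {t : ℝ} (ht : 0 < t) :
    (∏ i, (t ^ v i * x i) ^ μ i)
      = t ^ (∑ i, v i * (μ i : ℝ)) * ∏ i, x i ^ μ i := by
  rw [Real.rpow_sum_of_pos ht, ← Finset.prod_mul_distrib]
  refine Finset.prod_congr rfl fun i _ => ?_
  rw [mul_zpow, Real.rpow_mul ht.le, Real.rpow_intCast]

/-- a strict separating hyperplane for the signed support of a
(generalized) polynomial `f(x) = Σ_{μ∈σ} c_μ x^μ` forces: for each `x > 0`, the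
coefficients of `f(t^v ∗ x)` grouped by the exponent `v·μ` are `≤ 0` above the
separating value `a` and `≥ 0` below it, the leading grouped coefficient is
negative, and `f(t^v ∗ x) < 0` for all sufficiently large `t`. -/
theorem stmt6 {m : ℕ} (σf : Finset (Fin m → ℤ)) (c : (Fin m → ℤ) → ℝ)
    (hc : ∀ μ ∈ σf, c μ ≠ 0)
    (v : Fin m → ℝ) (hv : v ≠ 0) (a : ℝ)
    (hneg : ∀ μ ∈ σf, c μ < 0 → a ≤ ∑ i, v i * (μ i : ℝ))
    (hpos : ∀ μ ∈ σf, 0 < c μ → (∑ i, v i * (μ i : ℝ)) ≤ a)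
    (hstrict : ∃ μ ∈ σf, c μ < 0 ∧ a < ∑ i, v i * (μ i : ℝ)) :
    ∀ x : Fin m → ℝ, (∀ i, 0 < x i) →
      (∀ e : ℝ, a < e →
        (∑ μ ∈ σf.filter fun μ => (∑ i, v i * (μ i : ℝ)) = e, c μ * ∏ i, x i ^ μ i) ≤ 0) ∧
      (∀ e : ℝ, e < a →
        0 ≤ ∑ μ ∈ σf.filter fun μ => (∑ i, v i * (μ i : ℝ)) = e, c μ * ∏ i, x i ^ μ i) ∧
      (∃ e : ℝ, a < e ∧
        (∑ μ ∈ σf.filter fun μ => (∑ i, v i * (μ i : ℝ)) = e, c μ * ∏ i, x i ^ μ i) < 0) ∧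
      (∃ T : ℝ, 0 < T ∧ ∀ t : ℝ, T ≤ t →
        (∑ μ ∈ σf, c μ * ∏ i, (t ^ v i * x i) ^ μ i) < 0) := by
  intro x hx
  set d : (Fin m → ℤ) → ℝ := fun μ => ∑ i, v i * (μ i : ℝ) with hd
  have hp : ∀ μ : Fin m → ℤ, 0 < ∏ i, x i ^ μ i := fun μ =>
    Finset.prod_pos fun i _ => zpow_pos (hx i) _
  -- any μ in the support with d μ > a has negative coefficient
  have hcneg : ∀ μ ∈ σf, a < d μ → c μ < 0 := by
    intro μ hμ hdμ
    rcases lt_trichotomy (c μ) 0 with h | h | h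
    · exact h
    · exact absurd h (hc μ hμ)
    · exact absurd (hpos μ hμ h) (not_le.mpr hdμ)
  obtain ⟨μ₀, hμ₀, hcμ₀, haμ₀⟩ := hstrict
  refine ⟨?_, ?_, ?_, ?_⟩
  · intro e he
    refine Finset.sum_nonpos fun μ hμ => ?_
    obtain ⟨hμσ, hdμ⟩ := Finset.mem_filter.mp hμ
    have hde : d μ = e := hdμ
    exact mul_nonpos_of_nonpos_of_nonneg
      (hcneg μ hμσ (hde ▸ he)).le (hp μ).le
  · intro e he
    refine Finset.sum_nonneg fun μ hμ => ?_
    obtain ⟨hμσ, hdμ⟩ := Finset.mem_filter.mp hμ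
    have : 0 < c μ := by
      rcases lt_trichotomy (c μ) 0 with h | h | h
      · have hde : d μ = e := hdμ
        exact absurd (hneg μ hμσ h) (not_le.mpr (show (∑ i, v i * (μ i : ℝ)) < a from lt_of_eq_of_lt hde he))
      · exact absurd h (hc μ hμσ)
      · exact h
    exact mul_nonneg this.le (hp μ).le
  · refine ⟨d μ₀, haμ₀, Finset.sum_neg (fun μ hμ => ?_)
      ⟨μ₀, Finset.mem_filter.mpr ⟨hμ₀, rfl⟩⟩⟩
    obtain ⟨hμσ, hdμ⟩ := Finset.mem_filter.mp hμ
    have hde : d μ = d μ₀ := hdμ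
    exact mul_neg_of_neg_of_pos (hcneg μ hμσ (hde ▸ haμ₀)) (hp μ)
  · -- asymptotics
    obtain ⟨μM, hμM, hM⟩ := σf.exists_max_image d ⟨μ₀, hμ₀⟩
    set M := d μM with hMdef
    have haM : a < M := lt_of_lt_of_le haμ₀ (hM μ₀ hμ₀)
    set L : ℝ := ∑ μ ∈ σf.filter fun μ => d μ = M, c μ * ∏ i, x i ^ μ i with hL
    have hLneg : L < 0 := by
      refine Finset.sum_neg (fun μ hμ => ?_) ⟨μM, Finset.mem_filter.mpr ⟨hμM, rfl⟩⟩
      obtain ⟨hμσ, hdμ⟩ := Finset.mem_filter.mp hμ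
      exact mul_neg_of_neg_of_pos (hcneg μ hμσ (hdμ ▸ haM)) (hp μ)
    -- the rescaled sum tends to L
    have htend : Filter.Tendsto
        (fun t : ℝ => ∑ μ ∈ σf, (c μ * ∏ i, x i ^ μ i) * t ^ (d μ - M))
        Filter.atTop (nhds L) := by
      have : L = ∑ μ ∈ σf, if d μ = M then c μ * ∏ i, x i ^ μ i else 0 := by
        rw [hL, Finset.sum_filter]
      rw [this]
      refine tendsto_finset_sum _ fun μ hμ => ?_
      by_cases h : d μ = M
      · simp only [h, if_pos]
        refine tendsto_const_nhds.congr' ?_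
        filter_upwards [Filter.eventually_gt_atTop 0] with t ht
        rw [sub_self, Real.rpow_zero, mul_one]
      · simp only [h, if_neg, not_false_iff]
        have hlt : d μ - M < 0 := sub_neg.mpr (lt_of_le_of_ne (hM μ hμ) h)
        have := (tendsto_rpow_neg_atTop (neg_pos.mpr hlt)).const_mul
          (c μ * ∏ i, x i ^ μ i)
        simpa using this
    have hev : ∀ᶠ t : ℝ in Filter.atTop,
        (∑ μ ∈ σf, (c μ * ∏ i, x i ^ μ i) * t ^ (d μ - M)) < 0 :=
      htend.eventually_lt_const hLneg
    obtain ⟨T₀, hT₀⟩ := Filter.eventually_atTop.mp hev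
    refine ⟨max T₀ 1, lt_of_lt_of_le one_pos (le_max_right _ _), fun t ht => ?_⟩
    have ht0 : 0 < t := lt_of_lt_of_le one_pos (le_trans (le_max_right _ _) ht)
    have key : (∑ μ ∈ σf, c μ * ∏ i, (t ^ v i * x i) ^ μ i)
        = t ^ M * ∑ μ ∈ σf, (c μ * ∏ i, x i ^ μ i) * t ^ (d μ - M) := by
      rw [Finset.mul_sum]
      refine Finset.sum_congr rfl fun μ hμ => ?_
      rw [stmt6_aux_prod v x hx μ ht0,
        show (∑ i, v i * (μ i : ℝ)) = d μ from rfl,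
        show d μ = M + (d μ - M) by ring, Real.rpow_add ht0]
      ring
    rw [key]
    exact mul_neg_of_pos_of_neg (Real.rpow_pos_of_pos ht0 _)
      (hT₀ t (le_trans (le_max_left _ _) ht))
end

section
/- Define recursively the matrices N_n ∈ ℝ^{(3n+3)×4n} by N_1 = [P₁; P₂] and N_n = [[N_{n−1}, P₁],[0_{3×(4n−4)}, P₂]], where P₁ ∈ ℝ^{3n×4} has first row (−1,1,0,0), second row (0,0,−1,1), last row (−1,0,0,1), and all other rows zero, and P₂ = [[1,−1,0,0],[0,0,1,−1],[0,1,−1,0]] ∈ ℝ^{3×4}. Then rank(N_n) = 3n for all n ≥ 1; equivalently, the left kernel of N_n has dimension 3 and ker(N_n) has dimension n. -/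
open Matrix

namespace Strongly

variable (K : Type*) [CommRing K]

/-- `P₁` block (with `3n+3` rows, as used in forming `N_{n+1}`): nonzero rows are
row 1 = (−1,1,0,0), row 2 = (0,0,−1,1) and the last row = (−1,0,0,1). -/
def P1 (n : ℕ) : Matrix (Fin (3 * n + 3)) (Fin 4) K := fun i j =>
  if (i : ℕ) = 0 then ![(-1 : K), 1, 0, 0] j
  else if (i : ℕ) = 1 then ![(0 : K), 0, -1, 1] j
  else if (i : ℕ) = 3 * n + 2 then ![(-1 : K), 0, 0, 1] j
  else 0

def P2 : Matrix (Fin 3) (Fin 4) K :=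
  !![1, -1, 0, 0; 0, 0, 1, -1; 0, 1, -1, 0]

/-- Stoichiometric matrices of the reduced strongly irreversible `n`-site
phosphorylation networks: `N_{n+1} = [[N_n, P₁],[0, P₂]]` (and `N_0` is the empty
3×0 matrix, so that `N_1 = [P₁; P₂]`). -/
def Nmat : (n : ℕ) → Matrix (Fin (3 * n + 3)) (Fin (4 * n)) K
  | 0 => 0
  | n + 1 =>
      Matrix.reindex (finSumFinEquiv.trans (finCongr (by omega)))
        (finSumFinEquiv.trans (finCongr (by omega)))
        (Matrix.fromBlocks (Nmat n) (P1 K n) 0 (P2 K))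

/-- `Q₁` block of the reactant matrix. -/
def Q1 (n : ℕ) : Matrix (Fin (3 * n + 3)) (Fin 4) K := fun i j =>
  if (i : ℕ) = 0 then ![(1 : K), 0, 0, 0] j
  else if (i : ℕ) = 1 then ![(0 : K), 0, 1, 0] j
  else if (i : ℕ) = 3 * n + 2 then ![(1 : K), 0, 0, 0] j
  else 0

def Q2 : Matrix (Fin 3) (Fin 4) K :=
  !![0, 1, 0, 0; 0, 0, 0, 1; 0, 0, 1, 0]

/-- Reactant matrices: `A_{n+1} = [[A_n, Q₁],[0, Q₂]]`. -/
def Amat : (n : ℕ) → Matrix (Fin (3 * n + 3)) (Fin (4 * n)) K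
  | 0 => 0
  | n + 1 =>
      Matrix.reindex (finSumFinEquiv.trans (finCongr (by omega)))
        (finSumFinEquiv.trans (finCongr (by omega)))
        (Matrix.fromBlocks (Amat n) (Q1 K n) 0 (Q2 K))

/-- Conservation law matrix `W_n = [Id₃, W̄, …, W̄]` with `W̄ = [[1,0,0],[0,1,0],[1,1,1]]`. -/
def Wmat (n : ℕ) : Matrix (Fin 3) (Fin (3 * n + 3)) K := fun i j =>
  if (j : ℕ) < 3 then (if (i : ℕ) = (j : ℕ) then 1 else 0)
  else if (i : ℕ) = 2 then 1
  else if (i : ℕ) = ((j : ℕ) - 3) % 3 then 1 else 0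

/-- Extreme matrix `E_n`: block diagonal with blocks `(1,1,1,1)ᵀ`. -/
def Emat (n : ℕ) : Matrix (Fin (4 * n)) (Fin n) K := fun i k =>
  if (i : ℕ) / 4 = (k : ℕ) then 1 else 0

/-- Columns of `E_n`. -/
def Ecol (n : ℕ) : Fin n → Fin (4 * n) → K := fun k i =>
  if (i : ℕ) / 4 = (k : ℕ) then 1 else 0

/-- `N'_n`: the stoichiometric matrix with its first three rows removed. -/
def Nmat' (n : ℕ) : Matrix (Fin (3 * n)) (Fin (4 * n)) K :=
  (Nmat K n).submatrix (fun i => (⟨(i : ℕ) + 3, by have := i.isLt; omega⟩ : Fin (3 * n + 3))) id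

/-- `A'_n`: the reactant matrix with its first three rows removed. -/
def Amat' (n : ℕ) : Matrix (Fin (3 * n)) (Fin (4 * n)) K :=
  (Amat K n).submatrix (fun i => (⟨(i : ℕ) + 3, by have := i.isLt; omega⟩ : Fin (3 * n + 3))) id

/-- The square matrix `N'_n · diag(E_n λ) · A'ᵀ_n`. -/
def Csq (n : ℕ) (lam : Fin n → K) : Matrix (Fin (3 * n)) (Fin (3 * n)) K :=
  Nmat' K n * Matrix.diagonal ((Emat K n).mulVec lam) * (Amat' K n)ᵀ

/-- The matrix `N'_n · diag(E_n λ) · Aᵀ_n` of which `D_n` is a Gale dual. -/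
def Galemat (n : ℕ) (lam : Fin n → K) : Matrix (Fin (3 * n)) (Fin (3 * n + 3)) K :=
  Nmat' K n * Matrix.diagonal ((Emat K n).mulVec lam) * (Amat K n)ᵀ

/-- Gale dual matrix `D_n`, given by `D_nᵀ = [D^(0), D^(1), …, D^(n)]` with
`D^(0) = [[1,1,−1],[0,1,0],[0,0,1]]` and `D^(i) = [[0,0,−1],[−(i−1),−(i−1),−i],[1,1,1]]`. -/
def Dmat (n : ℕ) : Matrix (Fin (3 * n + 3)) (Fin 3) K := fun j c =>
  if (j : ℕ) < 3 then
    (if (c : ℕ) = 0 then (if (j : ℕ) = 2 then -1 else 1)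
     else if (c : ℕ) = 1 then (if (j : ℕ) = 1 then 1 else 0)
     else (if (j : ℕ) = 2 then 1 else 0))
  else
    (if (c : ℕ) = 0 then (if (j : ℕ) % 3 = 2 then -1 else 0)
     else if (c : ℕ) = 1 then
       (if (j : ℕ) % 3 = 2 then -(((j : ℕ) / 3 : ℕ) : K) else 1 - (((j : ℕ) / 3 : ℕ) : K))
     else 1)

end Strongly

open Strongly

section Aux

lemma P2_mulVec_eq_zero_iff (z : Fin 4 → ℝ) :
    (P2 ℝ).mulVec z = 0 ↔ ∀ j, z j = z 0 := by
  constructor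
  · intro h j
    have h0 := congrFun h 0
    have h1 := congrFun h 1
    have h2 := congrFun h 2
    simp [P2, mulVec, dotProduct, Fin.sum_univ_four] at h0 h1 h2
    fin_cases j <;> simp <;> linarith
  · intro h
    funext k
    have h1 := h 1; have h2 := h 2; have h3 := h 3
    fin_cases k <;> simp [P2, mulVec, dotProduct, Fin.sum_univ_four] <;> linarith

lemma P1_mulVec_const (n : ℕ) (z : Fin 4 → ℝ) (h : ∀ j, z j = z 0) :
    (P1 ℝ n).mulVec z = 0 := by
  funext i
  have h1 := h 1; have h2 := h 2; have h3 := h 3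
  simp only [P1, mulVec, dotProduct, Fin.sum_univ_four]
  split_ifs <;> simp <;> linarith

lemma key (n : ℕ) (x : Fin (4*n) → ℝ) :
    (Nmat ℝ n).mulVec x = 0 ↔
      ∃ c : Fin n → ℝ, ∀ i : Fin (4*n), x i = c ⟨(i:ℕ)/4, by have := i.isLt; omega⟩ := by
  induction n with
  | zero =>
      simp only [Nmat, Matrix.zero_mulVec, eq_self_iff_true, true_iff]
      exact ⟨Fin.elim0, fun i => i.elim0⟩
  | succ n ih =>
      set eC : Fin (4*n) ⊕ Fin 4 ≃ Fin (4*(n+1)) :=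
        finSumFinEquiv.trans (finCongr (by omega)) with heC
      have hval1 : ∀ a : Fin (4*n), ((eC (Sum.inl a) : ℕ)) = a := by
        intro a; rfl
      have hval2 : ∀ b : Fin 4, ((eC (Sum.inr b) : ℕ)) = 4*n + b := by
        intro b; rfl
      have hmv : (Nmat ℝ (n+1)).mulVec x =
          ((Matrix.fromBlocks (Nmat ℝ n) (P1 ℝ n) 0 (P2 ℝ)).mulVec (x ∘ eC)) ∘
            (finSumFinEquiv.trans (finCongr (by omega : 3*n+3+3 = 3*(n+1)+3))).symm := by
        show ((Matrix.fromBlocks (Nmat ℝ n) (P1 ℝ n) 0 (P2 ℝ)).submatrix _ _).mulVec x = _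
        rw [Matrix.submatrix_mulVec_equiv]
        rfl
      set y : Fin (4*n) → ℝ := fun a => x (eC (Sum.inl a)) with hy
      set z : Fin 4 → ℝ := fun b => x (eC (Sum.inr b)) with hz
      have hsplit : (Nmat ℝ (n+1)).mulVec x = 0 ↔
          (Nmat ℝ n).mulVec y = 0 ∧ (P2 ℝ).mulVec z = 0 := by
        rw [hmv]
        constructor
        · intro h
          have h' : (Matrix.fromBlocks (Nmat ℝ n) (P1 ℝ n) 0 (P2 ℝ)).mulVec (x ∘ eC) = 0 := by
            funext s
            have := congrFun h ((finSumFinEquiv.trans (finCongr (by omega : 3*n+3+3 = 3*(n+1)+3))) s)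
            simpa using this
          rw [Matrix.fromBlocks_mulVec] at h'
          have hA : (Nmat ℝ n).mulVec y + (P1 ℝ n).mulVec z = 0 := by
            funext a; exact congrFun h' (Sum.inl a)
          have hB : (0 : Matrix (Fin 3) (Fin (4*n)) ℝ).mulVec y + (P2 ℝ).mulVec z = 0 := by
            funext b; exact congrFun h' (Sum.inr b)
          rw [Matrix.zero_mulVec, zero_add] at hB
          refine ⟨?_, hB⟩
          have hzc : ∀ j, z j = z 0 := (P2_mulVec_eq_zero_iff z).mp hB
          have := P1_mulVec_const n z hzc
          rw [this, add_zero] at hA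
          exact hA
        · rintro ⟨h1, h2⟩
          have hzc : ∀ j, z j = z 0 := (P2_mulVec_eq_zero_iff z).mp h2
          funext s
          rw [Matrix.fromBlocks_mulVec]
          show Sum.elim _ _ _ = 0
          rcases hs : ((finSumFinEquiv.trans (finCongr (by omega : 3*n+3+3 = 3*(n+1)+3))).symm s) with a | b
          · show ((Nmat ℝ n).mulVec y + (P1 ℝ n).mulVec z) a = 0
            rw [P1_mulVec_const n z hzc, h1]; simp
          · show ((0 : Matrix (Fin 3) (Fin (4*n)) ℝ).mulVec y + (P2 ℝ).mulVec z) b = 0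
            rw [h2, Matrix.zero_mulVec]; simp
      rw [hsplit]
      constructor
      · rintro ⟨h1, h2⟩
        obtain ⟨c', hc'⟩ := (ih y).mp h1
        have hzc : ∀ j, z j = z 0 := (P2_mulVec_eq_zero_iff z).mp h2
        refine ⟨fun k => if h : (k:ℕ) < n then c' ⟨k, h⟩ else z 0, ?_⟩
        intro i
        by_cases hi : (i:ℕ) < 4*n
        · have : x i = y ⟨i, hi⟩ := rfl
          rw [this, hc' ⟨i, hi⟩]
          have hd : (i:ℕ)/4 < n := by omega
          simp only [hd, dif_pos]
        · have hi4 : (i:ℕ) - 4*n < 4 := by have := i.isLt; omega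
          have : x i = z ⟨(i:ℕ) - 4*n, hi4⟩ := by
            rw [hz]; congr 1; apply Fin.ext; rw [hval2]; simp; omega
          rw [this, hzc]
          have hd : ¬ ((i:ℕ)/4 < n) := by omega
          simp only [hd, dif_neg, not_false_iff]
      · rintro ⟨c, hc⟩
        constructor
        · apply (ih y).mpr
          refine ⟨fun k => c ⟨k, by omega⟩, ?_⟩
          intro a
          change x (eC (Sum.inl a)) = _
          rw [hc]
          exact congrArg c (by apply Fin.ext; simp [hval1])
        · apply (P2_mulVec_eq_zero_iff z).mpr
          intro j
          change x (eC (Sum.inr j)) = x (eC (Sum.inr 0))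
          rw [hc, hc]
          congr 1
          apply Fin.ext
          have h1 := hval2 j
          have h2 := hval2 (0 : Fin 4)
          simp only [Fin.val_mk] at *
          omega

lemma ker_eq (n : ℕ) :
    LinearMap.ker (Nmat ℝ n).mulVecLin =
      LinearMap.range (LinearMap.funLeft ℝ ℝ
        (fun i : Fin (4*n) => (⟨(i:ℕ)/4, by have := i.isLt; omega⟩ : Fin n))) := by
  ext x
  rw [LinearMap.mem_ker, LinearMap.mem_range]
  rw [Matrix.mulVecLin_apply, key]
  constructor
  · rintro ⟨c, hc⟩
    exact ⟨c, by funext i; exact (hc i).symm⟩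
  · rintro ⟨c, hc⟩
    exact ⟨c, fun i => by rw [← hc]; rfl⟩

lemma fsurj (n : ℕ) :
    Function.Surjective (fun i : Fin (4*n) => (⟨(i:ℕ)/4, by have := i.isLt; omega⟩ : Fin n)) := by
  intro k
  refine ⟨⟨4*(k:ℕ), by have := k.isLt; omega⟩, ?_⟩
  apply Fin.ext
  simp [Nat.mul_div_cancel_left]

lemma finrank_ker (n : ℕ) :
    Module.finrank ℝ (LinearMap.ker (Nmat ℝ n).mulVecLin) = n := by
  rw [ker_eq, LinearMap.finrank_range_of_inj
    (LinearMap.funLeft_injective_of_surjective ℝ ℝ _ (fsurj n)), Module.finrank_fin_fun]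


end Aux

/-- the stoichiometric matrix `N_n` of the reduced strongly
irreversible `n`-site phosphorylation network has rank `3n`; equivalently its
kernel has dimension `n` and its left kernel has dimension `3`. -/
theorem stmt7 (n : ℕ) (hn : 1 ≤ n) :
    (Nmat ℝ n).rank = 3 * n ∧
    Module.finrank ℝ (LinearMap.ker (Nmat ℝ n).mulVecLin) = n ∧
    Module.finrank ℝ (LinearMap.ker ((Nmat ℝ n)ᵀ).mulVecLin) = 3 := by

  have hk := finrank_ker n
  have hrn : (Nmat ℝ n).rank + n = 4 * n := by
    have h := LinearMap.finrank_range_add_finrank_ker (Nmat ℝ n).mulVecLin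
    rw [hk] at h
    rw [Matrix.rank, h]
    simp [Module.finrank_fin_fun]
  have hrank : (Nmat ℝ n).rank = 3 * n := by omega
  refine ⟨hrank, hk, ?_⟩
  have hrt : ((Nmat ℝ n)ᵀ).rank = 3 * n := by rw [Matrix.rank_transpose, hrank]
  have h2 : ((Nmat ℝ n)ᵀ).rank +
      Module.finrank ℝ (LinearMap.ker ((Nmat ℝ n)ᵀ).mulVecLin) = 3 * n + 3 := by
    rw [Matrix.rank, LinearMap.finrank_range_add_finrank_ker]
    simp [Module.finrank_fin_fun]
  omega
end

section
/- Let N_n be the stoichiometric matrix of the reduced strongly irreversible n-site phosphorylation network. Define E_n ∈ ℝ^{4n×n} to be the block diagonal matrix with n diagonal blocks each equal to the column vector (1,1,1,1)ᵀ ∈ ℝ^4. Then the columns E_n^(1),…,E_n^(n) of E_n form a basis of ker(N_n), have pairwise disjoint supports, and constitute a choice of extreme vectors of the flux cone C = ker(N_n) ∩ ℝ^{4n}_{≥0}; i.e., every support-minimal nonzero vector of C is a positive multiple of some column of E_n. -/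
open Matrix

open Strongly

/-!
By the block form `N_{n+1} = [[N_n, P₁], [0, P₂]]`, a vector lies in `ker N_{n+1}` iff its last
four coordinates lie in `ker P₂`, i.e. are equal (and then `P₁` kills them), and the remaining
coordinates lie in `ker N_n`. By induction, `ker N_n` consists of the vectors that are constant
on each of the `n` blocks of four coordinates, i.e. of the pullbacks `c ∘ block n` of vectors
`c ∈ Kⁿ`. The columns of `E_n` are the pullbacks of the standard basis, and since the support of
`c ∘ block n` is the preimage of the support of `c`, the support-minimal vectors of the cone are
those with `c` supported at a single block.
-/

open Function

namespace Strongly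

variable {K : Type*} [CommRing K]

def block (n : ℕ) (i : Fin (4 * n)) : Fin n := ⟨(i : ℕ) / 4, by omega⟩

lemma block_surjective (n : ℕ) : Surjective (block n) :=
  fun k => ⟨⟨4 * k, by omega⟩, Fin.ext (by simp [block])⟩

lemma Ecol_eq_single_comp_block (n : ℕ) (k : Fin n) :
    Ecol K n k = Pi.single k 1 ∘ block n := by
  funext i
  simp [Ecol, Pi.single_apply, block, Fin.ext_iff]

lemma Ecol_apply_ne_zero_iff [Nontrivial K] {n : ℕ} {k : Fin n} {i : Fin (4 * n)} :
    Ecol K n k i ≠ 0 ↔ block n i = k := by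
  simp [Ecol_eq_single_comp_block, Pi.single_apply]

lemma Ecol_nonneg [PartialOrder K] [ZeroLEOneClass K] (n : ℕ) (k : Fin n) (i : Fin (4 * n)) :
    0 ≤ Ecol K n k i := by
  unfold Ecol
  split_ifs <;> simp

lemma P1_mulVec_const (n : ℕ) (x : K) : P1 K n *ᵥ (fun _ => x) = 0 := by
  funext i
  simp only [P1, mulVec, dotProduct, Fin.sum_univ_four, Pi.zero_apply]
  split_ifs <;> simp

lemma P2_mulVec_eq_zero_iff (u : Fin 4 → K) : P2 K *ᵥ u = 0 ↔ ∃ x, u = fun _ => x := by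
  constructor
  · intro h
    have h0 : u 0 - u 1 = 0 := by
      simpa [P2, mulVec, dotProduct, Fin.sum_univ_four, sub_eq_add_neg] using congrFun h 0
    have h1 : u 2 - u 3 = 0 := by
      simpa [P2, mulVec, dotProduct, Fin.sum_univ_four, sub_eq_add_neg] using congrFun h 1
    have h2 : u 1 - u 2 = 0 := by
      simpa [P2, mulVec, dotProduct, Fin.sum_univ_four, sub_eq_add_neg] using congrFun h 2
    refine ⟨u 0, funext fun j => ?_⟩
    match j with
    | 0 => rfl
    | 1 => linear_combination -h0
    | 2 => linear_combination -h0 - h2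
    | 3 => linear_combination -h0 - h1 - h2
  · rintro ⟨x, rfl⟩
    funext i
    fin_cases i <;> simp [P2, mulVec, dotProduct, Fin.sum_univ_four]

def rowEquiv (n : ℕ) : Fin (3 * n + 3) ⊕ Fin 3 ≃ Fin (3 * (n + 1) + 3) :=
  finSumFinEquiv.trans (finCongr (by omega))

def colEquiv (n : ℕ) : Fin (4 * n) ⊕ Fin 4 ≃ Fin (4 * (n + 1)) :=
  finSumFinEquiv.trans (finCongr (by omega))

lemma Nmat_succ (n : ℕ) :
    Nmat K (n + 1) = reindex (rowEquiv n) (colEquiv n) (fromBlocks (Nmat K n) (P1 K n) 0 (P2 K)) :=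
  rfl

lemma Nmat_succ_mulVec_eq_zero_iff (n : ℕ) (w : Fin (4 * (n + 1)) → K) :
    Nmat K (n + 1) *ᵥ w = 0 ↔
      Nmat K n *ᵥ (w ∘ colEquiv n ∘ Sum.inl) = 0 ∧
        ∃ x, w ∘ colEquiv n ∘ Sum.inr = fun _ => x := by
  rw [Nmat_succ, reindex_apply, submatrix_mulVec_equiv, Equiv.symm_symm,
    (rowEquiv n).symm.surjective.injective_comp_right.eq_iff' (Pi.zero_comp _), fromBlocks_mulVec,
    ← Sum.elim_zero_zero, Sum.elim_eq_iff, zero_mulVec, zero_add, ← P2_mulVec_eq_zero_iff]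
  refine and_congr_left fun hP2 => ?_
  obtain ⟨x, hx⟩ := (P2_mulVec_eq_zero_iff _).1 hP2
  rw [comp_assoc, hx, P1_mulVec_const, add_zero]

lemma block_colEquiv_inl (n : ℕ) (a : Fin (4 * n)) :
    block (n + 1) (colEquiv n (Sum.inl a)) = (block n a).castSucc := by
  ext
  simp only [block, colEquiv, Equiv.trans_apply, finCongr_apply, Fin.val_cast,
    finSumFinEquiv_apply_left, Fin.val_castAdd, Fin.val_castSucc]

lemma block_colEquiv_inr (n : ℕ) (b : Fin 4) :
    block (n + 1) (colEquiv n (Sum.inr b)) = Fin.last n := by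
  ext
  simp only [block, colEquiv, Equiv.trans_apply, finCongr_apply, Fin.val_cast,
    finSumFinEquiv_apply_right, Fin.val_natAdd, Fin.val_last]
  omega

lemma exists_comp_block_succ_iff {α : Type*} (n : ℕ) (w : Fin (4 * (n + 1)) → α) :
    (∃ c, c ∘ block (n + 1) = w) ↔
      (∃ c, c ∘ block n = w ∘ colEquiv n ∘ Sum.inl) ∧
        ∃ x, w ∘ colEquiv n ∘ Sum.inr = fun _ => x := by
  constructor
  · rintro ⟨c, rfl⟩
    exact ⟨⟨Fin.init c, funext fun a => by simp [block_colEquiv_inl, Fin.init]⟩,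
      ⟨c (Fin.last n), funext fun b => by simp [block_colEquiv_inr]⟩⟩
  · rintro ⟨⟨c, hc⟩, x, hx⟩
    refine ⟨Fin.snoc c x, (colEquiv n).surjective.injective_comp_right (funext ?_)⟩
    rintro (a | b)
    · simpa [block_colEquiv_inl] using congrFun hc a
    · simpa [block_colEquiv_inr] using (congrFun hx b).symm

theorem Nmat_mulVec_eq_zero_iff (n : ℕ) (w : Fin (4 * n) → K) :
    Nmat K n *ᵥ w = 0 ↔ ∃ c, c ∘ block n = w := by
  induction n with
  | zero =>
    simp only [Nmat, zero_mulVec, true_iff]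
    exact ⟨![], funext fun i => absurd i.isLt (by omega)⟩
  | succ n ih => rw [Nmat_succ_mulVec_eq_zero_iff, ih, exists_comp_block_succ_iff]

lemma Ecol_eq_funLeft_comp_basisFun (n : ℕ) :
    Ecol K n = LinearMap.funLeft K K (block n) ∘ Pi.basisFun K (Fin n) := by
  funext k
  simp [Ecol_eq_single_comp_block, LinearMap.funLeft]

lemma linearIndependent_Ecol (n : ℕ) : LinearIndependent K (Ecol K n) := by
  rw [Ecol_eq_funLeft_comp_basisFun]
  exact (Pi.basisFun K (Fin n)).linearIndependent.map' _
    (LinearMap.ker_eq_bot.2 (LinearMap.funLeft_injective_of_surjective K K _ (block_surjective n)))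

lemma span_range_Ecol (n : ℕ) :
    Submodule.span K (Set.range (Ecol K n)) =
      LinearMap.range (LinearMap.funLeft K K (block n)) := by
  rw [Ecol_eq_funLeft_comp_basisFun, Set.range_comp, Submodule.span_image, Module.Basis.span_eq,
    Submodule.map_top]

theorem Nmat_mulVec_eq_zero_iff_mem_span (n : ℕ) (w : Fin (4 * n) → K) :
    Nmat K n *ᵥ w = 0 ↔ w ∈ Submodule.span K (Set.range (Ecol K n)) := by
  rw [Nmat_mulVec_eq_zero_iff, span_range_Ecol]
  rfl

lemma Nmat_mulVec_Ecol (n : ℕ) (k : Fin n) : Nmat K n *ᵥ Ecol K n k = 0 :=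
  (Nmat_mulVec_eq_zero_iff n _).2 ⟨Pi.single k 1, (Ecol_eq_single_comp_block n k).symm⟩

lemma exists_eq_smul_Ecol_of_support_subset {n : ℕ} {k : Fin n} {w : Fin (4 * n) → K}
    (hw : Nmat K n *ᵥ w = 0) (hsupp : support w ⊆ support (Ecol K n k)) :
    ∃ a : K, w = a • Ecol K n k := by
  obtain ⟨c, rfl⟩ := (Nmat_mulVec_eq_zero_iff n w).1 hw
  refine ⟨c k, funext fun i => ?_⟩
  by_cases hi : block n i = k
  · simp [Ecol_eq_single_comp_block, hi]
  · have hE : Ecol K n k i = 0 := by simp [Ecol_eq_single_comp_block, hi]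
    simpa [hE] using not_imp_not.1 (@hsupp i) hE

lemma support_smul_Ecol [Nontrivial K] {n : ℕ} {k : Fin n} {a : K} (ha : a ≠ 0) :
    support (a • Ecol K n k) = support (Ecol K n k) := by
  ext i
  by_cases hi : block n i = k <;> simp [Ecol_eq_single_comp_block, hi, ha]

theorem support_eq_support_Ecol_of_subset [Nontrivial K] {n : ℕ} {k : Fin n}
    {w : Fin (4 * n) → K} (hw0 : w ≠ 0) (hw : Nmat K n *ᵥ w = 0)
    (hsupp : support w ⊆ support (Ecol K n k)) :
    support w = support (Ecol K n k) := by
  obtain ⟨a, rfl⟩ := exists_eq_smul_Ecol_of_support_subset hw hsupp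
  exact support_smul_Ecol (left_ne_zero_of_smul hw0)

theorem exists_pos_smul_Ecol_of_minimal [PartialOrder K] [ZeroLEOneClass K] [Nontrivial K] {n : ℕ}
    {w : Fin (4 * n) → K} (hw0 : w ≠ 0) (hw : Nmat K n *ᵥ w = 0)
    (hw_nonneg : ∀ i, 0 ≤ w i)
    (hmin : ∀ v : Fin (4 * n) → K, v ≠ 0 → Nmat K n *ᵥ v = 0 → (∀ i, 0 ≤ v i) →
      support v ⊆ support w → support v = support w) :
    ∃ (k : Fin n) (a : K), 0 < a ∧ w = a • Ecol K n k := by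
  obtain ⟨c, rfl⟩ := (Nmat_mulVec_eq_zero_iff n w).1 hw
  obtain ⟨k, hk⟩ : ∃ k, c k ≠ 0 := by
    by_contra! h
    exact hw0 (funext fun i => h _)
  obtain ⟨i, rfl⟩ := block_surjective n k
  have hE : support (Ecol K n (block n i)) ⊆ support (c ∘ block n) := fun j hj => by
    rw [mem_support, Ecol_apply_ne_zero_iff] at hj
    simpa [hj] using hk
  have hE0 : Ecol K n (block n i) ≠ 0 := fun h => Ecol_apply_ne_zero_iff.2 rfl (congrFun h i)
  obtain ⟨a, ha⟩ := exists_eq_smul_Ecol_of_support_subset hw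
    (hmin _ hE0 (Nmat_mulVec_Ecol n _) (Ecol_nonneg n _) hE).symm.subset
  have hai : c (block n i) = a := by simpa [Ecol_eq_single_comp_block] using congrFun ha i
  exact ⟨block n i, a, hai ▸ (hw_nonneg i).lt_of_ne' hk, ha⟩

end Strongly

theorem stmt9_general (n : ℕ) :
    LinearIndependent ℝ (Ecol ℝ n) ∧
    (∀ w : Fin (4 * n) → ℝ,
        (Nmat ℝ n).mulVec w = 0 ↔ w ∈ Submodule.span ℝ (Set.range (Ecol ℝ n))) ∧
    (∀ k k' : Fin n, k ≠ k' → ∀ i, Ecol ℝ n k i ≠ 0 → Ecol ℝ n k' i = 0) ∧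
    (∀ k : Fin n,
        (Nmat ℝ n).mulVec (Ecol ℝ n k) = 0 ∧ (∀ i, 0 ≤ Ecol ℝ n k i) ∧
        (∀ w : Fin (4 * n) → ℝ, w ≠ 0 → (Nmat ℝ n).mulVec w = 0 → (∀ i, 0 ≤ w i) →
            {i | w i ≠ 0} ⊆ {i | Ecol ℝ n k i ≠ 0} →
            {i | w i ≠ 0} = {i | Ecol ℝ n k i ≠ 0})) ∧
    (∀ w : Fin (4 * n) → ℝ, w ≠ 0 → (Nmat ℝ n).mulVec w = 0 → (∀ i, 0 ≤ w i) →
        (∀ v : Fin (4 * n) → ℝ, v ≠ 0 → (Nmat ℝ n).mulVec v = 0 → (∀ i, 0 ≤ v i) →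
            {i | v i ≠ 0} ⊆ {i | w i ≠ 0} → {i | v i ≠ 0} = {i | w i ≠ 0}) →
        ∃ (k : Fin n) (c : ℝ), 0 < c ∧ w = c • Ecol ℝ n k) :=
  ⟨linearIndependent_Ecol n, Nmat_mulVec_eq_zero_iff_mem_span n,
    fun _ _ hkk' _ hk => by_contra fun hk' =>
      hkk' ((Ecol_apply_ne_zero_iff.1 hk).symm.trans (Ecol_apply_ne_zero_iff.1 hk')),
    fun k => ⟨Nmat_mulVec_Ecol n k, Ecol_nonneg n k,
      fun _ hw0 hw _ => support_eq_support_Ecol_of_subset hw0 hw⟩,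
    fun _ hw0 hw hw_nonneg => exists_pos_smul_Ecol_of_minimal hw0 hw hw_nonneg⟩

/-- the columns of `E_n` (block diagonal with blocks `(1,1,1,1)ᵀ`)
form a basis of `ker N_n` with pairwise disjoint supports, and they are a choice
of extreme vectors of the flux cone `ker N_n ∩ ℝ^{4n}_{≥0}`: each column lies in
the cone and is support-minimal, and every support-minimal nonzero vector of the
cone is a positive multiple of some column. -/
theorem stmt9 (n : ℕ) (hn : 1 ≤ n) :
    LinearIndependent ℝ (Ecol ℝ n) ∧
    (∀ w : Fin (4 * n) → ℝ,
        (Nmat ℝ n).mulVec w = 0 ↔ w ∈ Submodule.span ℝ (Set.range (Ecol ℝ n))) ∧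
    (∀ k k' : Fin n, k ≠ k' → ∀ i, Ecol ℝ n k i ≠ 0 → Ecol ℝ n k' i = 0) ∧
    (∀ k : Fin n,
        (Nmat ℝ n).mulVec (Ecol ℝ n k) = 0 ∧ (∀ i, 0 ≤ Ecol ℝ n k i) ∧
        (∀ w : Fin (4 * n) → ℝ, w ≠ 0 → (Nmat ℝ n).mulVec w = 0 → (∀ i, 0 ≤ w i) →
            {i | w i ≠ 0} ⊆ {i | Ecol ℝ n k i ≠ 0} →
            {i | w i ≠ 0} = {i | Ecol ℝ n k i ≠ 0})) ∧
    (∀ w : Fin (4 * n) → ℝ, w ≠ 0 → (Nmat ℝ n).mulVec w = 0 → (∀ i, 0 ≤ w i) →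
        (∀ v : Fin (4 * n) → ℝ, v ≠ 0 → (Nmat ℝ n).mulVec v = 0 → (∀ i, 0 ≤ v i) →
            {i | v i ≠ 0} ⊆ {i | w i ≠ 0} → {i | v i ≠ 0} = {i | w i ≠ 0}) →
        ∃ (k : Fin n) (c : ℝ), 0 < c ∧ w = c • Ecol ℝ n k) :=
  stmt9_general n
end
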